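/- arXiv:2308.12790 — 7 statements merged into one kernel-verified Lean document; each statement's English description precedes it below -/
import Mathlib

section
/- Let G be a profinite group (a compact, Hausdorff, totally disconnected topological group) with normalized Haar measure m. Let n ≥ 2, let θ be a continuous automorphism of G and b ∈ G satisfy θ(b) = b and θ^{n-1}(x) = b x b⁻¹ for all x ∈ G, and define the n-ary operation f(x₁, …, xₙ) = x₁ · θ(x₂) · θ²(x₃) ⋯ θ^{n-1}(xₙ) · b. Then m is invariant under all n-ary translations: for every measurable set A ⊆ G, every index 1 ≤ i ≤ n, and all elements x₁, …, x_{i-1}, x_{i+1}, …, xₙ ∈ G, the set f(x₁, …, x_{i-1}, A, x_{i+1}, …, xₙ) = { x₁ · θ(x₂) ⋯ θ^{i-2}(x_{i-1}) · θ^{i-1}(a) · θ^{i}(x_{i+1}) ⋯ θ^{n-1}(xₙ) · b : a ∈ A } has the same measure as A. -/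
open MeasureTheory

/-- Auxiliary: iterates of a continuous automorphism are continuous. -/
theorem mulAut_pow_continuous {G : Type*} [Group G] [TopologicalSpace G]
    (θ : MulAut G) (hθ : Continuous θ) (m : ℕ) :
    Continuous fun y : G => (θ ^ m) y := by
  induction m with
  | zero => simpa using continuous_id'
  | succ k ih =>
    have : (fun y : G => (θ ^ (k + 1)) y) = fun y : G => (θ ^ k) (θ y) := by
      funext y; rw [pow_succ]; rfl
    rw [this]
    exact ih.comp hθ

/-- Auxiliary: splitting `List.ofFn` at an index. -/
theorem ofFn_split {M : Type*} {n : ℕ} (g : Fin n → M) (i : Fin n) :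
    List.ofFn g = (List.ofFn fun k : Fin i => g (Fin.castLE i.2.le k))
      ++ g i :: (List.ofFn fun k : Fin (n - (i + 1)) => g ⟨(i : ℕ) + 1 + k, by omega⟩) := by
  apply List.ext_getElem
  · simp; omega
  · intro j hj hj'
    simp only [List.length_ofFn] at hj
    rcases lt_trichotomy j (i : ℕ) with h | h | h
    · rw [List.getElem_append_left (by simpa using h)]
      simp
    · subst h
      rw [List.getElem_append_right (by simp)]
      simp
    · rw [List.getElem_append_right (by simp; omega), List.getElem_cons,
        dif_neg (by simp; omega)]
      simp only [List.getElem_ofFn]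
      congr 1
      ext
      simp; omega

/-- Auxiliary: the normalized Haar measure on a compact group is invariant under
any map of the form `a ↦ c * α a * d` with `α` a continuous automorphism. -/
theorem haar_map_affine_eq
    {G : Type*} [Group G] [TopologicalSpace G] [IsTopologicalGroup G]
    [CompactSpace G] [T2Space G]
    [MeasurableSpace G] [BorelSpace G]
    (μ : Measure G) [μ.IsHaarMeasure] [IsProbabilityMeasure μ]
    (α : MulAut G) (hα : Continuous α) (c d : G) :
    μ.map (fun a : G => c * α a * d) = μ := by
  have hmul : Continuous (fun a : G => c * a * d) := by continuity
  have hcomp : μ.map (fun a : G => c * α a * d)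
      = (μ.map α).map (fun a : G => c * a * d) := by
    rw [Measure.map_map hmul.measurable hα.measurable]
    rfl
  have hαhomeo : Continuous (α.symm : G → G) := by
    let h : G ≃ₜ G := Continuous.homeoOfEquivCompactToT2 (f := α.toEquiv) hα
    exact h.symm.continuous
  have h1 : (μ.map α).IsHaarMeasure := MulEquiv.isHaarMeasure_map μ α hα hαhomeo
  have h2 : IsProbabilityMeasure (μ.map α) :=
    Measure.isProbabilityMeasure_map hα.measurable.aemeasurable
  have hαeq : μ.map α = μ :=
    Measure.isHaarMeasure_eq_of_isProbabilityMeasure _ _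
  rw [hcomp, hαeq]
  have hsplit : (fun a : G => c * a * d) = (fun a : G => c * a) ∘ (fun a : G => a * d) := by
    funext a; simp [mul_assoc]
  rw [hsplit, ← Measure.map_map (measurable_const_mul c) (measurable_mul_const d)]
  have h3 : (μ.map (· * d)).IsHaarMeasure := Measure.isHaarMeasure_map_mul_right μ d
  have h4 : IsProbabilityMeasure (μ.map (· * d)) :=
    Measure.isProbabilityMeasure_map (measurable_mul_const d).aemeasurable
  have h5 : μ.map (· * d) = μ := Measure.isHaarMeasure_eq_of_isProbabilityMeasure _ _
  rw [h5, map_mul_left_eq_self]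

/-- Let `G` be a profinite group with normalized Haar measure `μ`, `n ≥ 2`,
`θ` a continuous automorphism and `b ∈ G` with `θ b = b` and `θ^(n-1) x = b * x * b⁻¹`,
and let `f (x₁, …, xₙ) = x₁ * θ x₂ * θ² x₃ * ⋯ * θ^(n-1) xₙ * b` be the derived `n`-ary
operation.  Then `μ` is invariant under all `n`-ary translations: for every measurable `A`,
every position `i`, and all fixed entries `x`, the set
`{ f (x₁, …, x_{i-1}, a, x_{i+1}, …, xₙ) : a ∈ A }` has the same measure as `A`. -/
theorem haar_invariant_under_polyadic_translations
    {G : Type*} [Group G] [TopologicalSpace G] [IsTopologicalGroup G]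
    [CompactSpace G] [T2Space G] [TotallyDisconnectedSpace G]
    [MeasurableSpace G] [BorelSpace G]
    (μ : Measure G) [μ.IsHaarMeasure] [IsProbabilityMeasure μ]
    (n : ℕ) (hn : 2 ≤ n)
    (θ : MulAut G) (hθ : Continuous θ) (b : G)
    (hb : θ b = b)
    (hconj : ∀ x : G, (θ ^ (n - 1)) x = b * x * b⁻¹)
    (f : (Fin n → G) → G)
    (hf : ∀ x : Fin n → G, f x = (List.ofFn fun k : Fin n => (θ ^ (k : ℕ)) (x k)).prod * b) :
    ∀ A : Set G, MeasurableSet A → ∀ (i : Fin n) (x : Fin n → G),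
      μ ((fun a : G => f (Function.update x i a)) '' A) = μ A := by
  intro A hA i x
  set C : G := (List.ofFn fun k : Fin i =>
      (θ ^ (k : ℕ)) (Function.update x i 1 (Fin.castLE i.2.le k))).prod with hC
  set D : G := ((List.ofFn fun k : Fin (n - (i + 1)) =>
      (θ ^ ((i : ℕ) + 1 + k)) (Function.update x i 1 ⟨(i : ℕ) + 1 + k, by omega⟩)).prod) * b
    with hD
  have hsplit : ∀ a : G, f (Function.update x i a) = C * (θ ^ (i : ℕ)) a * D := by
    intro a
    rw [hf, ofFn_split (fun k : Fin n => (θ ^ (k : ℕ)) (Function.update x i a k)) i]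
    have e1 : ∀ k : Fin i,
        Function.update x i a (Fin.castLE i.2.le k) = Function.update x i 1 (Fin.castLE i.2.le k) := by
      intro k
      rw [Function.update_apply, Function.update_apply, if_neg, if_neg] <;>
        · simp only [Fin.ext_iff, Fin.coe_castLE]; omega
    have e2 : ∀ k : Fin (n - (i + 1)),
        Function.update x i a ⟨(i : ℕ) + 1 + k, by omega⟩
          = Function.update x i 1 ⟨(i : ℕ) + 1 + k, by omega⟩ := by
      intro k
      rw [Function.update_apply, Function.update_apply, if_neg, if_neg] <;>
        · simp only [Fin.ext_iff]; omega
    simp only [List.prod_append, List.prod_cons, e1, e2, Function.update_self, hC, hD]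
    simp only [Fin.coe_castLE, Fin.coe_cast]
    group
  have hfun : (fun a : G => f (Function.update x i a)) = fun a => C * (θ ^ (i : ℕ)) a * D := by
    funext a; exact hsplit a
  rw [hfun]
  have hθi : Continuous fun y : G => (θ ^ (i : ℕ)) y := mulAut_pow_continuous θ hθ i
  have hinv : Continuous fun y : G => ((θ ^ (i : ℕ))⁻¹ : MulAut G) y := by
    let h : G ≃ₜ G := Continuous.homeoOfEquivCompactToT2 (f := (θ ^ (i : ℕ)).toEquiv) hθi
    exact h.symm.continuous
  have himg : (fun a : G => C * (θ ^ (i : ℕ)) a * D) '' A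
      = (fun z : G => ((θ ^ (i : ℕ))⁻¹ : MulAut G) (C⁻¹ * z * D⁻¹)) ⁻¹' A := by
    ext z
    simp only [Set.mem_image, Set.mem_preimage]
    constructor
    · rintro ⟨a, ha, rfl⟩
      have h1 : C⁻¹ * (C * (θ ^ (i : ℕ)) a * D) * D⁻¹ = (θ ^ (i : ℕ)) a := by group
      rw [h1]
      have h2 : ((θ ^ (i : ℕ))⁻¹ : MulAut G) ((θ ^ (i : ℕ)) a) = a := by
        simp
      rwa [h2]
    · intro hz
      refine ⟨((θ ^ (i : ℕ))⁻¹ : MulAut G) (C⁻¹ * z * D⁻¹), hz, ?_⟩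
      have h2 : (θ ^ (i : ℕ)) (((θ ^ (i : ℕ))⁻¹ : MulAut G) (C⁻¹ * z * D⁻¹))
          = C⁻¹ * z * D⁻¹ := by simp
      rw [h2]; group
  rw [himg]
  have hmeas : Measurable (fun z : G => ((θ ^ (i : ℕ))⁻¹ : MulAut G) (C⁻¹ * z * D⁻¹)) :=
    (hinv.comp (by continuity)).measurable
  rw [← Measure.map_apply hmeas hA]
  have hform : (fun z : G => ((θ ^ (i : ℕ))⁻¹ : MulAut G) (C⁻¹ * z * D⁻¹))
      = fun z : G => (((θ ^ (i : ℕ))⁻¹ : MulAut G) C⁻¹)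
          * ((θ ^ (i : ℕ))⁻¹ : MulAut G) z * (((θ ^ (i : ℕ))⁻¹ : MulAut G) D⁻¹) := by
    funext z; simp [map_mul]
  rw [hform, haar_map_affine_eq μ ((θ ^ (i : ℕ))⁻¹) hinv _ _]
end

section
/- Let G be a profinite group (a compact, Hausdorff, totally disconnected topological group) with normalized Haar measure m. Let n ≥ 2, let θ be a continuous automorphism of G and b ∈ G satisfy θ(b) = b and θ^{n-1}(x) = b x b⁻¹ for all x ∈ G, and define f(x₁, …, xₙ) = x₁ · θ(x₂) · θ²(x₃) ⋯ θ^{n-1}(xₙ) · b. Suppose m′ is a regular Borel probability measure on G such that for every measurable set A ⊆ G, every index 1 ≤ i ≤ n, and all x₁, …, x_{i-1}, x_{i+1}, …, xₙ ∈ G, the set { x₁ · θ(x₂) ⋯ θ^{i-2}(x_{i-1}) · θ^{i-1}(a) · θ^{i}(x_{i+1}) ⋯ θ^{n-1}(xₙ) · b : a ∈ A } has m′-measure equal to m′(A). Then m′ = m. In other words, the polyadic group der_{θ,b}(G, ·) has a unique (normalized) Haar measure, and it coincides with the Haar measure of the group (G, ·). -/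
open MeasureTheory

/-- Auxiliary: the product of `List.ofFn v` where all entries except `v i` are `1` is `v i`. -/
lemma ofFn_prod_eq_single {M : Type*} [Monoid M] :
    ∀ (n : ℕ) (v : Fin n → M) (i : Fin n), (∀ j, j ≠ i → v j = 1) →
      (List.ofFn v).prod = v i := by
  intro n
  induction n with
  | zero => intro v i; exact i.elim0
  | succ m ih =>
    intro v i hv
    rw [List.ofFn_succ, List.prod_cons]
    cases i using Fin.cases with
    | zero =>
      have : (List.ofFn (fun j : Fin m => v j.succ)).prod = 1 := by
        apply List.prod_eq_one
        intro x hx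
        rw [List.mem_ofFn] at hx
        obtain ⟨j, rfl⟩ := hx
        exact hv j.succ (Fin.succ_ne_zero j)
      rw [this, mul_one]
    | succ k =>
      have h0 : v 0 = 1 := hv 0 (Ne.symm (Fin.succ_ne_zero k))
      have htail : (List.ofFn (v ∘ Fin.succ)).prod = (v ∘ Fin.succ) k := by
        apply ih
        intro j hj
        exact hv j.succ (fun h => hj (Fin.succ_injective m h))
      have hc : (List.ofFn fun i : Fin m => v i.succ) = List.ofFn (v ∘ Fin.succ) := rfl
      rw [hc, h0, one_mul, htail]
      rfl

/-- Let `G` be a profinite group with normalized Haar measure `μ`, `n ≥ 2`,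
`θ` a continuous automorphism and `b ∈ G` with `θ b = b` and `θ^(n-1) x = b * x * b⁻¹`,
and let `f (x₁, …, xₙ) = x₁ * θ x₂ * ⋯ * θ^(n-1) xₙ * b`.  If `m'` is a regular Borel
probability measure on `G` which is invariant under all `n`-ary translations
(for every measurable `A`, every position `i` and all fixed entries, the translated set
has `m'`-measure `m' A`), then `m' = μ`: the polyadic group `der_{θ,b}(G,·)` has a unique
normalized Haar measure and it coincides with the Haar measure of `(G,·)`. -/
theorem polyadic_haar_measure_unique
    {G : Type*} [Group G] [TopologicalSpace G] [IsTopologicalGroup G]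
    [CompactSpace G] [T2Space G] [TotallyDisconnectedSpace G]
    [MeasurableSpace G] [BorelSpace G]
    (μ : Measure G) [μ.IsHaarMeasure] [IsProbabilityMeasure μ]
    (n : ℕ) (hn : 2 ≤ n)
    (θ : MulAut G) (hθ : Continuous θ) (b : G)
    (hb : θ b = b)
    (hconj : ∀ x : G, (θ ^ (n - 1)) x = b * x * b⁻¹)
    (f : (Fin n → G) → G)
    (hf : ∀ x : Fin n → G, f x = (List.ofFn fun k : Fin n => (θ ^ (k : ℕ)) (x k)).prod * b)
    (m' : Measure G) [IsProbabilityMeasure m'] [m'.Regular]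
    (hinv : ∀ A : Set G, MeasurableSet A → ∀ (i : Fin n) (x : Fin n → G),
      m' ((fun a : G => f (Function.update x i a)) '' A) = m' A) :
    m' = μ := by
  -- Step 1: m' is left-invariant.
  obtain ⟨m, rfl⟩ : ∃ m, n = m + 2 := ⟨n - 2, by omega⟩
  have key : ∀ (g : G) (A : Set G), MeasurableSet A →
      m' ((fun a : G => g * a) '' A) = m' A := by
    intro g A hA
    set i : Fin (m + 2) := Fin.last (m + 1) with hi
    set x : Fin (m + 2) → G := Function.update (fun _ => (1 : G)) 0 (g * b⁻¹) with hx
    have hcomp : (fun a : G => f (Function.update x i a)) = fun a : G => g * a := by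
      funext a
      rw [hf]
      set v : Fin (m + 2) → G := fun k => (θ ^ (k : ℕ)) (Function.update x i a k) with hv
      have h0 : v 0 = g * b⁻¹ := by
        have h0i : (0 : Fin (m + 2)) ≠ i := by
          simp [hi, Fin.ext_iff]
        simp [hv, Function.update_of_ne h0i, hx]
      have hlast : v i = b * a * b⁻¹ := by
        have : v i = (θ ^ (m + 1)) a := by
          simp [hv, hi]
        rw [this]
        have := hconj a
        simpa using this
      have hrest : ∀ j : Fin (m + 2), j ≠ 0 → j ≠ i → v j = 1 := by
        intro j hj0 hji
        simp [hv, Function.update_of_ne hji, hx, Function.update_of_ne hj0]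
      -- split the list
      rw [List.ofFn_succ, List.prod_cons]
      have htail : (List.ofFn (v ∘ Fin.succ)).prod = v i := by
        have := ofFn_prod_eq_single (m + 1) (v ∘ Fin.succ) (Fin.last m) ?_
        · rw [this]
          congr 1
        · intro j hj
          apply hrest
          · exact Fin.succ_ne_zero j
          · intro h
            apply hj
            have hval : (j : ℕ) + 1 = m + 1 := by
              simpa [hi, Fin.ext_iff] using h
            have hjm : (j : ℕ) = m := by omega
            exact Fin.ext (by simpa using hjm)
      have hc : (List.ofFn fun i : Fin (m + 1) => v i.succ) = List.ofFn (v ∘ Fin.succ) := rfl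
      show v 0 * (List.ofFn fun i : Fin (m + 1) => v i.succ).prod * b = g * a
      rw [hc, htail, h0, hlast]
      group
    rw [← hcomp]
    exact hinv A hA i x
  have hleft : m'.IsMulLeftInvariant := by
    constructor
    intro g
    ext s hs
    rw [Measure.map_apply (measurable_const_mul g) hs]
    have : (fun a : G => g * a) ⁻¹' s = (fun a : G => g⁻¹ * a) '' s := by
      ext y
      simp only [Set.mem_preimage, Set.mem_image]
      constructor
      · intro h; exact ⟨g * y, h, by group⟩
      · rintro ⟨z, hz, rfl⟩; simpa using hz
    rw [this, key g⁻¹ s hs]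
  -- Step 2: uniqueness of invariant measures on a compact group.
  have heq := Measure.isMulInvariant_eq_smul_of_compactSpace m' μ
  have hcone : m'.haarScalarFactor μ = 1 := by
    have h := congrArg (fun ν : Measure G => ν Set.univ) heq
    simp only [Measure.smul_apply, measure_univ, smul_eq_mul, ENNReal.smul_def,
      mul_one] at h
    exact_mod_cast h.symm
  rw [heq, hcone, one_smul]
end

section
/- Let G be a compact Hausdorff topological group with normalized Haar measure m, let n ≥ 2, and let θ be a continuous automorphism of G and b ∈ G satisfy θ(b) = b and θ^{n-1}(x) = b x b⁻¹ for all x ∈ G; set f(x₁, …, xₙ) = x₁ · θ(x₂) ⋯ θ^{n-1}(xₙ) · b. Then the following are equivalent: (1) m is invariant under all n-ary translations, i.e. for every measurable A ⊆ G, every 1 ≤ i ≤ n, and all x₁, …, x_{i-1}, x_{i+1}, …, xₙ ∈ G, the set { x₁ · θ(x₂) ⋯ θ^{i-2}(x_{i-1}) · θ^{i-1}(a) · θ^{i}(x_{i+1}) ⋯ θ^{n-1}(xₙ) · b : a ∈ A } has measure m(A); (2) θ preserves m, i.e. m(θ(A)) = m(A) for every measurable A ⊆ G. -/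
open MeasureTheory

/-- `List.ofFn` of an updated function is `List.set` of the original list. -/
private lemma ofFn_update' {α : Type*} {n : ℕ} (φ : Fin n → α) (i : Fin n) (c : α) :
    List.ofFn (Function.update φ i c) = (List.ofFn φ).set i c := by
  apply List.ext_getElem
  · simp
  · intro k h1 h2
    simp only [List.length_ofFn] at h1
    rw [List.getElem_ofFn, List.getElem_set]
    simp only [Function.update_apply, Fin.ext_iff]
    by_cases hk : (i : ℕ) = k
    · simp [hk]
    · simp [hk, Ne.symm hk]

/-- Every continuous automorphism of a compact group preserves the Haar probability measure,
in the sense that images of measurable sets have the same measure. -/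
private lemma aut_image_measure {G : Type*} [Group G] [TopologicalSpace G] [IsTopologicalGroup G]
    [CompactSpace G] [T2Space G] [MeasurableSpace G] [BorelSpace G]
    (μ : Measure G) [μ.IsHaarMeasure] [IsProbabilityMeasure μ]
    (ψ : MulAut G) (hψ : Continuous ψ) {A : Set G} (hA : MeasurableSet A) :
    μ (⇑ψ '' A) = μ A := by
  have hsc : Continuous ⇑ψ.symm :=
    (Continuous.homeoOfEquivCompactToT2 (f := ψ.toEquiv) hψ).symm.continuous
  have hmp : MeasurePreserving (⇑ψ.symm.toMonoidHom) μ μ :=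
    MonoidHom.measurePreserving hsc ψ.symm.surjective rfl
  have himg : ⇑ψ '' A = ⇑ψ.symm ⁻¹' A := by
    ext y
    simp only [Set.mem_image, Set.mem_preimage]
    constructor
    · rintro ⟨a, ha, rfl⟩; simpa using ha
    · intro hy; exact ⟨ψ.symm y, hy, by simp⟩
  rw [himg]
  exact hmp.measure_preimage hA.nullMeasurableSet

/-- Let `G` be a compact Hausdorff topological group with normalized Haar
measure `μ`, `n ≥ 2`, `θ` a continuous automorphism and `b ∈ G` with `θ b = b` and
`θ^(n-1) x = b * x * b⁻¹`; let `f (x₁, …, xₙ) = x₁ * θ x₂ * ⋯ * θ^(n-1) xₙ * b`.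
Then `μ` is invariant under all `n`-ary translations if and only if `θ` preserves `μ`,
i.e. `μ (θ '' A) = μ A` for every measurable `A`. -/
theorem polyadic_invariance_iff_automorphism_preserves_haar
    {G : Type*} [Group G] [TopologicalSpace G] [IsTopologicalGroup G]
    [CompactSpace G] [T2Space G]
    [MeasurableSpace G] [BorelSpace G]
    (μ : Measure G) [μ.IsHaarMeasure] [IsProbabilityMeasure μ]
    (n : ℕ) (hn : 2 ≤ n)
    (θ : MulAut G) (hθ : Continuous θ) (b : G)
    (hb : θ b = b)
    (hconj : ∀ x : G, (θ ^ (n - 1)) x = b * x * b⁻¹)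
    (f : (Fin n → G) → G)
    (hf : ∀ x : Fin n → G, f x = (List.ofFn fun k : Fin n => (θ ^ (k : ℕ)) (x k)).prod * b) :
    (∀ A : Set G, MeasurableSet A → ∀ (i : Fin n) (x : Fin n → G),
        μ ((fun a : G => f (Function.update x i a)) '' A) = μ A)
      ↔ (∀ A : Set G, MeasurableSet A → μ (⇑θ '' A) = μ A) := by
  -- continuity of powers of θ
  have hpow : ∀ k : ℕ, Continuous ⇑(θ ^ k) := by
    intro k
    induction k with
    | zero => simpa [pow_zero] using continuous_id
    | succ m ih =>
      have : ⇑(θ ^ (m + 1)) = ⇑(θ ^ m) ∘ ⇑θ := by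
        funext y; simp [pow_succ, MulAut.mul_apply]
      rw [this]; exact ih.comp hθ
  constructor
  · intro _ A hA
    exact aut_image_measure μ θ hθ hA
  · intro _ A hA i x
    classical
    set L : List G := List.ofFn (fun k : Fin n => (θ ^ (k : ℕ)) (x k)) with hL
    set P : G := (L.take i).prod with hP
    set Q : G := (L.drop (i + 1)).prod * b with hQ
    -- decompose the translation map
    have hdec : ∀ a : G, f (Function.update x i a) = P * (θ ^ (i : ℕ)) a * Q := by
      intro a
      rw [hf]
      have hupd : (fun k : Fin n => (θ ^ (k : ℕ)) (Function.update x i a k))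
          = Function.update (fun k : Fin n => (θ ^ (k : ℕ)) (x k)) i ((θ ^ (i : ℕ)) a) := by
        funext k
        rcases eq_or_ne k i with rfl | hk
        · simp
        · simp [Function.update_of_ne hk]
      rw [hupd, ofFn_update' _ i, List.prod_set]
      have hlt : (i : ℕ) < L.length := by simp [hL]
      rw [if_pos hlt]
      simp only [hP, hQ, hL, mul_assoc]
    -- the automorphism part
    set ψ : MulAut G := MulAut.conj Q⁻¹ * θ ^ (i : ℕ) with hψdef
    have hψc : Continuous ⇑ψ := by
      have : ⇑ψ = (fun y => Q⁻¹ * y * Q⁻¹⁻¹) ∘ ⇑(θ ^ (i : ℕ)) := by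
        funext y; simp [hψdef, MulAut.mul_apply, MulAut.conj_apply]
      rw [this]
      exact (by fun_prop : Continuous fun y : G => Q⁻¹ * y * Q⁻¹⁻¹).comp (hpow i)
    have hmap : (fun a : G => f (Function.update x i a)) = (fun y => (P * Q) * y) ∘ ⇑ψ := by
      funext a
      simp only [Function.comp_apply, hψdef, MulAut.mul_apply, MulAut.conj_apply, hdec a]
      group
    rw [hmap, Set.image_comp, Set.image_mul_left, measure_preimage_mul]
    exact aut_image_measure μ ψ hψc hA
end

section
/- (Hosszú–Gloskin theorem.) Let n ≥ 2 and let (G, f) be an n-ary group, i.e. G is a nonempty set and f : Gⁿ → G satisfies: (associativity) for all 1 ≤ i < j ≤ n and all x₁, …, x_{2n-1} ∈ G, f(x₁, …, x_{i-1}, f(x_i, …, x_{n+i-1}), x_{n+i}, …, x_{2n-1}) = f(x₁, …, x_{j-1}, f(x_j, …, x_{n+j-1}), x_{n+j}, …, x_{2n-1}); and (unique solvability) for all a₁, …, aₙ, c ∈ G and every 1 ≤ i ≤ n there exists a unique x ∈ G with f(a₁, …, a_{i-1}, x, a_{i+1}, …, aₙ) = c. Then there exist a group operation · on G, an automorphism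 θ of (G, ·), and an element b ∈ G such that: (1) θ(b) = b; (2) θ^{n-1}(x) = b · x · b⁻¹ for every x ∈ G; (3) f(x₁, …, xₙ) = x₁ · θ(x₂) · θ²(x₃) ⋯ θ^{n-1}(xₙ) · b for all x₁, …, xₙ ∈ G. -/
/-- Associativity of an `n`-ary operation `f`:  for all positions `i < j < n` (0-indexed)
and every sequence `x₀, …, x_{2n-2}`, collapsing the block of `n` consecutive entries
starting at position `i` by `f` gives the same result as collapsing the block starting
at position `j`. -/
def PolyAssoc {G : Type*} (n : ℕ) (f : (Fin n → G) → G) : Prop :=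
  ∀ i j : ℕ, i < j → j < n → ∀ x : ℕ → G,
    f (fun k : Fin n =>
        if (k : ℕ) < i then x k
        else if (k : ℕ) = i then f (fun l : Fin n => x (i + l))
        else x ((k : ℕ) + n - 1)) =
    f (fun k : Fin n =>
        if (k : ℕ) < j then x k
        else if (k : ℕ) = j then f (fun l : Fin n => x (j + l))
        else x ((k : ℕ) + n - 1))

/-- Unique solvability of the `n`-ary operation `f` in each position: for every position
`i`, fixed entries `a`, and right-hand side `c`, there is a unique `x` with
`f (a₁, …, a_{i-1}, x, a_{i+1}, …, aₙ) = c`. -/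
def PolyUnique {G : Type*} (n : ℕ) (f : (Fin n → G) → G) : Prop :=
  ∀ (i : Fin n) (a : Fin n → G) (c : G), ∃! x : G, f (Function.update a i x) = c

set_option linter.unusedSectionVars false
set_option linter.unreachableTactic false
set_option linter.unusedTactic false

namespace HosszuAux

variable {G : Type*} {n : ℕ} (f : (Fin n → G) → G)

def fw (x : ℕ → G) : G := f fun k : Fin n => x (k : ℕ)

def cw (i : ℕ) (x : ℕ → G) : ℕ → G := fun k =>
  if k < i then x k else if k = i then fw f (fun l => x (i + l)) else x (k + n - 1)

theorem fw_congr {x y : ℕ → G} (h : ∀ k, k < n → x k = y k) : fw f x = fw f y :=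
  congrArg f (funext fun k => h k k.isLt)

theorem inst (hassoc : PolyAssoc n f) {i j : ℕ} (hij : i < j) (hjn : j < n)
    (x u v : ℕ → G) (hu : ∀ k, k < n → cw f i x k = u k)
    (hv : ∀ k, k < n → cw f j x k = v k) : fw f u = fw f v :=
  (fw_congr f hu).symm.trans ((hassoc i j hij hjn x).trans (fw_congr f hv))

theorem cw_lt {i : ℕ} {x : ℕ → G} {k : ℕ} (h : k < i) : cw f i x k = x k := if_pos h

theorem cw_eq {i : ℕ} {x : ℕ → G} : cw f i x i = fw f (fun l => x (i + l)) := by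
  simp [cw]

theorem cw_gt {i : ℕ} {x : ℕ → G} {k : ℕ} (h : i < k) : cw f i x k = x (k + n - 1) := by
  unfold cw; rw [if_neg (by omega), if_neg (by omega)]


section
variable [Nonempty G] (a : G)

def oh (i : ℕ) (y : G) : ℕ → G := fun k => if k = i then y else a

def p (i : ℕ) (y : G) : G := fw f (oh a i y)

noncomputable def rinv : G → G := Function.invFun (p f a 0)

noncomputable def sinv : G → G := Function.invFun (p f a (n-1))

def m0 (x z : G) : G := fw f (fun k => if k = 0 then x else if k = n-1 then z else a)

noncomputable def mulG (x y : G) : G := m0 f a x (sinv f a y)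

def bb : G := fw f (fun _ => a)

noncomputable def phi (i : ℕ) (y : G) : G := rinv f a (p f a i y)

noncomputable def invG (x : G) : G := Function.invFun (mulG f a x) a

omit [Nonempty G] in
theorem pupd (i : ℕ) (hi : i < n) (y : G) :
    f (Function.update (fun _ : Fin n => a) ⟨i, hi⟩ y) = p f a i y := by
  apply congrArg f
  funext k
  simp [Function.update_apply, oh, p, fw, Fin.ext_iff]

omit [Nonempty G] in
theorem pbij (hunique : PolyUnique n f) (i : ℕ) (hi : i < n) :
    Function.Bijective (p f a i) := by
  constructor
  · intro y₁ y₂ h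
    obtain ⟨x, -, hx⟩ := hunique ⟨i, hi⟩ (fun _ => a) (p f a i y₂)
    have h1 := hx y₁ (by show f _ = _; rw [pupd f a i hi]; exact h)
    have h2 := hx y₂ (by show f _ = _; rw [pupd f a i hi])
    rw [h1, h2]
  · intro c
    obtain ⟨y, hy, -⟩ := hunique ⟨i, hi⟩ (fun _ => a) c
    exact ⟨y, by rw [← pupd f a i hi]; exact hy⟩

variable (hn : 2 ≤ n) (hunique : PolyUnique n f)

include hn hunique in
theorem r_rinv (y : G) : p f a 0 (rinv f a y) = y :=
  Function.rightInverse_invFun (pbij f a hunique 0 (by omega)).2 y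

include hn hunique in
theorem rinv_r (y : G) : rinv f a (p f a 0 y) = y :=
  Function.leftInverse_invFun (pbij f a hunique 0 (by omega)).1 y

include hn hunique in
theorem s_sinv (y : G) : p f a (n-1) (sinv f a y) = y :=
  Function.rightInverse_invFun (pbij f a hunique (n-1) (by omega)).2 y

include hn hunique in
theorem sinv_s (y : G) : sinv f a (p f a (n-1) y) = y :=
  Function.leftInverse_invFun (pbij f a hunique (n-1) (by omega)).1 y


omit [Nonempty G] in
theorem p_a (i : ℕ) : p f a i a = bb f a := by
  apply fw_congr
  intro k hk
  simp only [oh, bb]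
  split_ifs <;> rfl

omit [Nonempty G] in
include hn in
theorem m0_a_right (x : G) : m0 f a x a = p f a 0 x := by
  apply fw_congr
  intro k hk
  simp only [oh]
  split_ifs <;> first | rfl | omega

omit [Nonempty G] in
include hn in
theorem m0_a_left (v : G) : m0 f a a v = p f a (n-1) v := by
  apply fw_congr
  intro k hk
  simp only [oh]
  split_ifs <;> first | rfl | omega

variable (hassoc : PolyAssoc n f)

omit [Nonempty G] in
include hn hassoc in
theorem A1 (u v : G) : m0 f a (p f a 0 u) v = m0 f a u (p f a (n-1) v) := by
  apply inst f hassoc (i := 0) (j := n-1) (by omega) (by omega)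
      (fun j => if j = 0 then u else if j = 2*n-2 then v else a)
  · intro k hk
    by_cases h0 : k = 0
    · subst h0
      rw [cw_eq]
      show _ = p f a 0 u
      apply fw_congr
      intro l hl
      simp only [oh]
      split_ifs <;> first | rfl | omega
    · rw [cw_gt f (by omega)]
      show _ = if k = 0 then p f a 0 u else if k = n-1 then v else a
      split_ifs <;> first | rfl | omega
  · intro k hk
    by_cases h0 : k = n-1
    · subst h0
      rw [cw_eq]
      show _ = if n-1 = 0 then u else if n-1 = n-1 then p f a (n-1) v else a
      rw [if_neg (by omega), if_pos rfl]
      apply fw_congr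
      intro l hl
      simp only [oh]
      split_ifs <;> first | rfl | omega
    · rw [cw_lt f (by omega)]
      show _ = if k = 0 then u else if k = n-1 then p f a (n-1) v else a
      split_ifs <;> first | rfl | omega


omit [Nonempty G] in
include hn hassoc in
theorem A2 (x w v : G) : m0 f a (m0 f a x w) v = m0 f a x (m0 f a w v) := by
  apply inst f hassoc (i := 0) (j := n-1) (by omega) (by omega)
      (fun j => if j = 0 then x else if j = n-1 then w else if j = 2*n-2 then v else a)
  · intro k hk
    by_cases h0 : k = 0
    · subst h0
      rw [cw_eq]
      show _ = if (0:ℕ) = 0 then m0 f a x w else if (0:ℕ) = n-1 then v else a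
      rw [if_pos rfl]
      apply fw_congr
      intro l hl
      split_ifs <;> first | rfl | omega
    · rw [cw_gt f (by omega)]
      show _ = if k = 0 then m0 f a x w else if k = n-1 then v else a
      split_ifs <;> first | rfl | omega
  · intro k hk
    by_cases h0 : k = n-1
    · subst h0
      rw [cw_eq]
      show _ = if n-1 = 0 then x else if n-1 = n-1 then m0 f a w v else a
      rw [if_neg (by omega), if_pos rfl]
      apply fw_congr
      intro l hl
      split_ifs <;> first | rfl | omega
    · rw [cw_lt f (by omega)]
      show _ = if k = 0 then x else if k = n-1 then m0 f a w v else a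
      split_ifs <;> first | rfl | omega

omit [Nonempty G] in
include hn hassoc in
theorem A3 (w v : G) : m0 f a (p f a (n-1) w) v = p f a (n-1) (m0 f a w v) := by
  apply inst f hassoc (i := 0) (j := n-1) (by omega) (by omega)
      (fun j => if j = n-1 then w else if j = 2*n-2 then v else a)
  · intro k hk
    by_cases h0 : k = 0
    · subst h0
      rw [cw_eq]
      show _ = if (0:ℕ) = 0 then p f a (n-1) w else if (0:ℕ) = n-1 then v else a
      rw [if_pos rfl]
      apply fw_congr
      intro l hl
      simp only [oh]
      split_ifs <;> first | rfl | omega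
    · rw [cw_gt f (by omega)]
      show _ = if k = 0 then p f a (n-1) w else if k = n-1 then v else a
      split_ifs <;> first | rfl | omega
  · intro k hk
    by_cases h0 : k = n-1
    · subst h0
      rw [cw_eq]
      show _ = if n-1 = n-1 then m0 f a w v else a
      rw [if_pos rfl]
      apply fw_congr
      intro l hl
      split_ifs <;> first | rfl | omega
    · rw [cw_lt f (by omega)]
      show _ = if k = n-1 then m0 f a w v else a
      split_ifs <;> first | rfl | omega

include hn hunique hassoc in
theorem mul_a (x : G) : mulG f a x a = x := by
  have h := A1 f a hn hassoc (rinv f a x) (sinv f a a)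
  rw [r_rinv f a hn hunique, s_sinv f a hn hunique,
    m0_a_right f a hn] at h
  show m0 f a x (sinv f a a) = x
  rw [h, r_rinv f a hn hunique]

include hn hunique in
theorem a_mul (y : G) : mulG f a a y = y := by
  show m0 f a a (sinv f a y) = y
  rw [m0_a_left f a hn, s_sinv f a hn hunique]

include hn hunique hassoc in
theorem sinv_m0 (y v : G) : sinv f a (m0 f a y v) = m0 f a (sinv f a y) v := by
  have h := A3 f a hn hassoc (sinv f a y) v
  rw [s_sinv f a hn hunique] at h
  rw [h, sinv_s f a hn hunique]

include hn hunique hassoc in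
theorem mul_assoc' (x y z : G) :
    mulG f a (mulG f a x y) z = mulG f a x (mulG f a y z) := by
  show m0 f a (m0 f a x (sinv f a y)) (sinv f a z) = m0 f a x (sinv f a (m0 f a y (sinv f a z)))
  rw [A2 f a hn hassoc, sinv_m0 f a hn hunique hassoc]

include hn hunique in
theorem mul_inv (x : G) : mulG f a x (invG f a x) = a := by
  have hex : ∃ y, mulG f a x y = a := by
    obtain ⟨v, hv, -⟩ := hunique ⟨n-1, by omega⟩ (fun k => if (k : ℕ) = 0 then x else a) a
    refine ⟨p f a (n-1) v, ?_⟩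
    show m0 f a x (sinv f a (p f a (n-1) v)) = a
    rw [sinv_s f a hn hunique]
    have hupd : f (Function.update (fun k : Fin n => if (k : ℕ) = 0 then x else a)
        ⟨n-1, by omega⟩ v) = m0 f a x v := by
      apply congrArg f
      funext k
      rw [Function.update_apply]
      show (if k = (⟨n-1, by omega⟩ : Fin n) then v else if (k : ℕ) = 0 then x else a) = _
      simp only [Fin.ext_iff]
      split_ifs <;> first | rfl | omega
    rw [hupd] at hv
    exact hv
  exact Function.invFun_eq hex


omit [Nonempty G] in
include hn hassoc in
theorem A4 (k : ℕ) (hk : k < n-1) (u : G) (t : ℕ → G) :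
    fw f (fun j => if j = 0 then p f a 0 u else if j ≤ k then a else t (j-k-1)) =
      m0 f a u (fw f (fun j => if j ≤ k then a else t (j-k-1))) := by
  apply inst f hassoc (i := 0) (j := n-1) (by omega) (by omega)
      (fun j => if j = 0 then u else if j ≤ n+k-1 then a else t (j - (n+k)))
  · intro k' hk'
    by_cases h0 : k' = 0
    · subst h0
      rw [cw_eq]
      show _ = if (0:ℕ) = 0 then p f a 0 u else if (0:ℕ) ≤ k then a else t (0-k-1)
      rw [if_pos rfl]
      apply fw_congr
      intro l hl
      simp only [oh]
      split_ifs <;> first | rfl | omega | (congr 1 <;> omega)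
    · rw [cw_gt f (by omega)]
      show _ = if k' = 0 then p f a 0 u else if k' ≤ k then a else t (k'-k-1)
      split_ifs <;> first | rfl | omega | (congr 1 <;> omega)
  · intro k' hk'
    by_cases h0 : k' = n-1
    · subst h0
      rw [cw_eq]
      show _ = if n-1 = 0 then u else if n-1 = n-1 then
          fw f (fun j => if j ≤ k then a else t (j-k-1)) else a
      rw [if_neg (by omega), if_pos rfl]
      apply fw_congr
      intro l hl
      split_ifs <;> first | rfl | omega | (congr 1 <;> omega)
    · rw [cw_lt f (by omega)]
      show _ = if k' = 0 then u else if k' = n-1 then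
          fw f (fun j => if j ≤ k then a else t (j-k-1)) else a
      split_ifs <;> first | rfl | omega | (congr 1 <;> omega)

omit [Nonempty G] in
include hn hassoc in
theorem A5 (k : ℕ) (hk : k < n-1) (u : G) (t : ℕ → G) :
    fw f (fun j => if j = 0 then p f a 0 u else if j ≤ k then a else t (j-k-1)) =
      fw f (fun j => if j = 0 then u else if j ≤ k then a
        else if j = k+1 then p f a (n-1) (t 0) else t (j-k-1)) := by
  apply inst f hassoc (i := 0) (j := k+1) (by omega) (by omega)
      (fun j => if j = 0 then u else if j ≤ n+k-1 then a else t (j - (n+k)))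
  · intro k' hk'
    by_cases h0 : k' = 0
    · subst h0
      rw [cw_eq]
      show _ = if (0:ℕ) = 0 then p f a 0 u else if (0:ℕ) ≤ k then a else t (0-k-1)
      rw [if_pos rfl]
      apply fw_congr
      intro l hl
      simp only [oh]
      split_ifs <;> first | rfl | omega | (congr 1 <;> omega)
    · rw [cw_gt f (by omega)]
      show _ = if k' = 0 then p f a 0 u else if k' ≤ k then a else t (k'-k-1)
      split_ifs <;> first | rfl | omega | (congr 1 <;> omega)
  · intro k' hk'
    by_cases h0 : k' = k+1
    · subst h0
      rw [cw_eq]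
      show _ = if k+1 = 0 then u else if k+1 ≤ k then a
        else if k+1 = k+1 then p f a (n-1) (t 0) else t (k+1-k-1)
      rw [if_neg (by omega), if_neg (by omega), if_pos rfl]
      apply fw_congr
      intro l hl
      simp only [oh]
      split_ifs <;> first | rfl | omega | (congr 1 <;> omega)
    · rcases Nat.lt_or_ge k' (k+1) with h1 | h1
      · rw [cw_lt f h1]
        show _ = if k' = 0 then u else if k' ≤ k then a
          else if k' = k+1 then p f a (n-1) (t 0) else t (k'-k-1)
        split_ifs <;> first | rfl | omega | (congr 1 <;> omega)
      · rw [cw_gt f (by omega)]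
        show _ = if k' = 0 then u else if k' ≤ k then a
          else if k' = k+1 then p f a (n-1) (t 0) else t (k'-k-1)
        split_ifs <;> first | rfl | omega | (congr 1 <;> omega)

omit [Nonempty G] in
include hn hassoc in
theorem A6 (k : ℕ) (hk : k < n-1) (y : G) (t : ℕ → G) :
    fw f (fun j => if j = 0 then p f a k y else if j ≤ k then a else t (j-k-1)) =
      fw f (fun j => if j < k then a else if j = k then y
        else if j = k+1 then p f a (n-1) (t 0) else t (j-k-1)) := by
  apply inst f hassoc (i := 0) (j := k+1) (by omega) (by omega)
      (fun j => if j = k then y else if j ≤ n+k-1 then a else t (j - (n+k)))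
  · intro k' hk'
    by_cases h0 : k' = 0
    · subst h0
      rw [cw_eq]
      show _ = if (0:ℕ) = 0 then p f a k y else if (0:ℕ) ≤ k then a else t (0-k-1)
      rw [if_pos rfl]
      apply fw_congr
      intro l hl
      simp only [oh]
      split_ifs <;> first | rfl | omega | (congr 1 <;> omega)
    · rw [cw_gt f (by omega)]
      show _ = if k' = 0 then p f a k y else if k' ≤ k then a else t (k'-k-1)
      split_ifs <;> first | rfl | omega | (congr 1 <;> omega)
  · intro k' hk'
    by_cases h0 : k' = k+1
    · subst h0
      rw [cw_eq]
      show _ = if k+1 < k then a else if k+1 = k then y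
        else if k+1 = k+1 then p f a (n-1) (t 0) else t (k+1-k-1)
      rw [if_neg (by omega), if_neg (by omega), if_pos rfl]
      apply fw_congr
      intro l hl
      simp only [oh]
      split_ifs <;> first | rfl | omega | (congr 1 <;> omega)
    · rcases Nat.lt_or_ge k' (k+1) with h1 | h1
      · rw [cw_lt f h1]
        show _ = if k' < k then a else if k' = k then y
          else if k' = k+1 then p f a (n-1) (t 0) else t (k'-k-1)
        split_ifs <;> first | rfl | omega | (congr 1 <;> omega)
      · rw [cw_gt f (by omega)]
        show _ = if k' < k then a else if k' = k then y
          else if k' = k+1 then p f a (n-1) (t 0) else t (k'-k-1)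
        split_ifs <;> first | rfl | omega | (congr 1 <;> omega)

omit [Nonempty G] in
include hn hassoc in
theorem A7 (j : ℕ) (hj : j < n-1) (y : G) :
    p f a 0 (p f a (j+1) y) = p f a 1 (p f a j y) := by
  apply inst f hassoc (i := 0) (j := 1) (by omega) (by omega)
      (fun i => if i = j+1 then y else a)
  · intro k' hk'
    by_cases h0 : k' = 0
    · subst h0
      rw [cw_eq]
      show _ = oh a 0 (p f a (j+1) y) 0
      rw [oh, if_pos rfl]
      apply fw_congr
      intro l hl
      simp only [oh]
      split_ifs <;> first | rfl | omega
    · rw [cw_gt f (by omega)]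
      show _ = oh a 0 (p f a (j+1) y) k'
      rw [oh]
      split_ifs <;> first | rfl | omega
  · intro k' hk'
    by_cases h0 : k' = 1
    · subst h0
      rw [cw_eq]
      show _ = oh a 1 (p f a j y) 1
      rw [oh, if_pos rfl]
      apply fw_congr
      intro l hl
      simp only [oh]
      split_ifs <;> first | rfl | omega
    · rcases Nat.lt_or_ge k' 1 with h1 | h1
      · rw [cw_lt f h1]
        show _ = oh a 1 (p f a j y) k'
        rw [oh]
        split_ifs <;> first | rfl | omega
      · rw [cw_gt f (by omega)]
        show _ = oh a 1 (p f a j y) k'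
        rw [oh]
        split_ifs <;> first | rfl | omega

omit [Nonempty G] in
include hn hassoc in
theorem A8 (y z : G) :
    fw f (fun j => if j = 0 then p f a 1 y else if j = 1 then z else a) =
      p f a 1 (m0 f a y z) := by
  apply inst f hassoc (i := 0) (j := 1) (by omega) (by omega)
      (fun i => if i = 1 then y else if i = n then z else a)
  · intro k' hk'
    by_cases h0 : k' = 0
    · subst h0
      rw [cw_eq]
      show _ = if (0:ℕ) = 0 then p f a 1 y else if (0:ℕ) = 1 then z else a
      rw [if_pos rfl]
      apply fw_congr
      intro l hl
      simp only [oh]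
      split_ifs <;> first | rfl | omega
    · rw [cw_gt f (by omega)]
      show _ = if k' = 0 then p f a 1 y else if k' = 1 then z else a
      split_ifs <;> first | rfl | omega
  · intro k' hk'
    by_cases h0 : k' = 1
    · subst h0
      rw [cw_eq]
      show _ = oh a 1 (m0 f a y z) 1
      rw [oh, if_pos rfl]
      apply fw_congr
      intro l hl
      split_ifs <;> first | rfl | omega
    · rcases Nat.lt_or_ge k' 1 with h1 | h1
      · rw [cw_lt f h1]
        show _ = oh a 1 (m0 f a y z) k'
        rw [oh]
        split_ifs <;> first | rfl | omega
      · rw [cw_gt f (by omega)]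
        show _ = oh a 1 (m0 f a y z) k'
        rw [oh]
        split_ifs <;> first | rfl | omega


include hn hunique hassoc in
theorem inv_mul (x : G) : mulG f a (invG f a x) x = a := by
  have h1 := mul_inv f a hn hunique x
  set y := invG f a x with hy
  have h2 := mul_inv f a hn hunique y
  set y' := invG f a y with hy'
  have e1 : mulG f a (mulG f a y x) (mulG f a y y') = mulG f a y x := by
    rw [h2, mul_a f a hn hunique hassoc]
  have e2 : mulG f a (mulG f a y x) (mulG f a y y') = a := by
    rw [mul_assoc' f a hn hunique hassoc y x (mulG f a y y'),
      ← mul_assoc' f a hn hunique hassoc x y y', h1, a_mul f a hn hunique, h2]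
  rw [← e1, e2]

include hn hunique hassoc in
theorem cancel_right {x y c : G} (h : mulG f a x c = mulG f a y c) : x = y := by
  have h2 := congrArg (fun w => mulG f a w (invG f a c)) h
  simp only [mul_assoc' f a hn hunique hassoc, mul_inv f a hn hunique,
    mul_a f a hn hunique hassoc] at h2
  exact h2

include hn hunique hassoc in
theorem Mlem (k : ℕ) (hk : k < n-1) (c : G) (t : ℕ → G) :
    fw f (fun j => if j = 0 then c else if j ≤ k then a else t (j-k-1)) =
      mulG f a c (fw f (fun j => if j ≤ k then a else t (j-k-1))) := by
  have h4 := A4 f a hn hassoc k hk (rinv f a c) t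
  rw [r_rinv f a hn hunique] at h4
  rw [h4]
  show _ = m0 f a c (sinv f a (fw f fun j => if j ≤ k then a else t (j-k-1)))
  have h1 := A1 f a hn hassoc (rinv f a c)
    (sinv f a (fw f (fun j => if j ≤ k then a else t (j-k-1))))
  rw [r_rinv f a hn hunique, s_sinv f a hn hunique] at h1
  exact h1.symm

include hn hunique hassoc in
theorem Rlem (k : ℕ) (hk : k < n-1) (y : G) (t : ℕ → G) :
    fw f (fun j => if j < k then a else if j = k then y else t (j-k-1)) =
      fw f (fun j => if j = 0 then phi f a k y else if j ≤ k then a else t (j-k-1)) := by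
  have h5 := A5 f a hn hassoc k hk (phi f a k y) (fun i => if i = 0 then sinv f a (t 0) else t i)
  have h6 := A6 f a hn hassoc k hk y (fun i => if i = 0 then sinv f a (t 0) else t i)
  rw [show p f a 0 (phi f a k y) = p f a k y from r_rinv f a hn hunique _] at h5
  have e : _ = _ := h5.symm.trans h6
  refine .trans ?_ (.trans e.symm ?_)
  · apply fw_congr
    intro j hj
    split_ifs <;>
      first | rfl | omega | (congr 1 <;> omega) |
        (rw [s_sinv f a hn hunique]; first | rfl | (congr 1 <;> omega))
  · apply fw_congr
    intro j hj
    split_ifs <;>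
      first | rfl | omega | (congr 1 <;> omega) |
        (rw [s_sinv f a hn hunique]; first | rfl | (congr 1 <;> omega))

include hn hunique in
theorem F1 (i : ℕ) (y : G) : mulG f a (phi f a i y) (bb f a) = p f a i y := by
  show m0 f a (rinv f a (p f a i y)) (sinv f a (bb f a)) = p f a i y
  rw [← p_a f a (n-1), sinv_s f a hn hunique, m0_a_right f a hn, r_rinv f a hn hunique]

include hn hunique in
theorem rb (c : G) : mulG f a c (bb f a) = p f a 0 c := by
  show m0 f a c (sinv f a (bb f a)) = p f a 0 c
  rw [← p_a f a (n-1), sinv_s f a hn hunique, m0_a_right f a hn]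

include hn hunique in
theorem phi_zero (y : G) : phi f a 0 y = y := rinv_r f a hn hunique y

include hn hunique in
theorem phi_a (i : ℕ) : phi f a i a = a := by
  show rinv f a (p f a i a) = a
  rw [p_a f a i, ← p_a f a 0, rinv_r f a hn hunique]


include hn hunique in
theorem foldr_const_a (L : List ℕ) (g : ℕ → G) (h : ∀ i ∈ L, g i = a) (w : G) :
    (L.map g).foldr (mulG f a) w = w := by
  induction L with
  | nil => rfl
  | cons i L ih =>
    simp only [List.map_cons, List.foldr_cons]
    rw [h i (by simp), ih (fun i hi => h i (by simp [hi])), a_mul f a hn hunique]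

include hn hunique hassoc in
theorem E : ∀ (d k : ℕ), k + d + 1 = n → ∀ x : ℕ → G,
    fw f (fun j => if j < k then a else x j) =
      ((List.range' k (n - k)).map (fun i => phi f a i (x i))).foldr (mulG f a) (bb f a) := by
  intro d
  induction d with
  | zero =>
    intro k hkn x
    have hk : k = n - 1 := by omega
    subst hk
    have hl : (List.range' (n-1) (n - (n-1))).map (fun i => phi f a i (x i)) =
        [phi f a (n-1) (x (n-1))] := by
      rw [show n - (n-1) = 1 from by omega]
      rfl
    rw [hl]
    show _ = mulG f a (phi f a (n-1) (x (n-1))) (bb f a)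
    rw [F1 f a hn hunique]
    apply fw_congr
    intro j hj
    show _ = oh a (n-1) (x (n-1)) j
    rw [oh]
    split_ifs <;> first | rfl | omega | (congr 1 <;> omega)
  | succ d ih =>
    intro k hkn x
    have hk : k < n - 1 := by omega
    have step1 : fw f (fun j => if j < k then a else x j) =
        fw f (fun j => if j < k then a else if j = k then x k
          else (fun i => x (k+1+i)) (j-k-1)) := by
      apply fw_congr
      intro j hj
      by_cases h1 : j < k
      · rw [if_pos h1, if_pos h1]
      · rw [if_neg h1, if_neg h1]
        by_cases h2 : j = k
        · rw [if_pos h2, h2]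
        · rw [if_neg h2]
          show x j = x (k+1+(j-k-1))
          congr 1
          omega
    have step2 : fw f (fun j => if j ≤ k then a else (fun i => x (k+1+i)) (j-k-1)) =
        fw f (fun j => if j < k+1 then a else x j) := by
      apply fw_congr
      intro j hj
      by_cases h1 : j ≤ k
      · rw [if_pos h1, if_pos (by omega)]
      · rw [if_neg h1, if_neg (show ¬ j < k+1 by omega)]
        show x (k+1+(j-k-1)) = x j
        congr 1
        omega
    refine step1.trans ((Rlem f a hn hunique hassoc k hk (x k) (fun i => x (k+1+i))).trans
      ((Mlem f a hn hunique hassoc k hk (phi f a k (x k)) (fun i => x (k+1+i))).trans ?_))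
    rw [congrArg (mulG f a (phi f a k (x k))) (step2.trans (ih (k+1) (by omega) x))]
    rw [show n - k = (n - (k+1)) + 1 from by omega, List.range'_succ]
    rfl


include hn hunique hassoc in
theorem phi_chain (j : ℕ) (hj : j < n-1) (y : G) :
    phi f a 1 (p f a j y) = p f a (j+1) y := by
  show rinv f a (p f a 1 (p f a j y)) = p f a (j+1) y
  rw [← A7 f a hn hassoc j hj y, rinv_r f a hn hunique]

include hn hunique hassoc in
theorem ss (y : G) : phi f a 1 (mulG f a y (bb f a)) = mulG f a (phi f a 1 y) (bb f a) := by
  rw [rb f a hn hunique, F1 f a hn hunique]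
  exact phi_chain f a hn hunique hassoc 0 (by omega) y

include hn hunique hassoc in
theorem phi_iter (j : ℕ) (hj : j < n) (y : G) : phi f a j y = (phi f a 1)^[j] y := by
  induction j with
  | zero => rw [Function.iterate_zero, id, phi_zero f a hn hunique]
  | succ j ihj =>
    have hj' : j < n - 1 := by omega
    have h1 : mulG f a (phi f a (j+1) y) (bb f a) =
        mulG f a (phi f a 1 (phi f a j y)) (bb f a) := by
      rw [F1 f a hn hunique, ← phi_chain f a hn hunique hassoc j hj' y,
        ← F1 f a hn hunique j y, ss f a hn hunique hassoc]
    have h2 := cancel_right f a hn hunique hassoc h1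
    rw [h2, ihj (by omega)]
    exact (Function.iterate_succ_apply' (phi f a 1) j y).symm

include hn hunique hassoc in
theorem th_bb : phi f a 1 (bb f a) = bb f a := by
  have h := ss f a hn hunique hassoc a
  rw [phi_a f a hn hunique 1, a_mul f a hn hunique] at h
  exact h

include hn hunique in
theorem rinv_bij : Function.Bijective (rinv f a) :=
  Function.bijective_iff_has_inverse.mpr
    ⟨p f a 0, r_rinv f a hn hunique, rinv_r f a hn hunique⟩

include hn hunique in
theorem phi_bij (i : ℕ) (hi : i < n) : Function.Bijective (phi f a i) :=
  Function.Bijective.comp (rinv_bij f a hn hunique) (pbij f a hunique i hi)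


include hn hunique hassoc in
theorem Ezero (x : ℕ → G) : fw f x =
    ((List.range' 0 n).map (fun i => phi f a i (x i))).foldr (mulG f a) (bb f a) := by
  have h := E f a hn hunique hassoc (n-1) 0 (by omega) x
  have e0 : fw f x = fw f (fun j => if j < 0 then a else x j) :=
    fw_congr f (fun j hj => by rw [if_neg (by omega)])
  exact e0.trans h

omit [Nonempty G] in
include hn in
theorem rsplit1 : List.range' 0 n = 0 :: (List.range' 1 (n-2) ++ [n-1]) := by
  have h1 : List.range' 0 n = 0 :: List.range' 1 (n-1) := by
    conv_lhs => rw [show n = (n-1)+1 from by omega]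
    rw [List.range'_succ]
  have h2 : List.range' 1 (n-1) = List.range' 1 (n-2) ++ [n-1] := by
    conv_lhs => rw [show n-1 = (n-2)+1 from by omega]
    rw [List.range'_concat, show 1 + 1*(n-2) = n-1 from by omega]
  rw [h1, h2]

omit [Nonempty G] in
include hn in
theorem rsplit2 : List.range' 0 n = 0 :: 1 :: List.range' 2 (n-2) := by
  have h1 : List.range' 0 n = 0 :: List.range' 1 (n-1) := by
    conv_lhs => rw [show n = (n-1)+1 from by omega]
    rw [List.range'_succ]
  have h2 : List.range' 1 (n-1) = 1 :: List.range' 2 (n-2) := by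
    conv_lhs => rw [show n-1 = (n-2)+1 from by omega]
    rw [List.range'_succ]
  rw [h1, h2]

include hn hunique hassoc in
theorem m0_expand (y z : G) :
    m0 f a y z = mulG f a y (mulG f a (phi f a (n-1) z) (bb f a)) := by
  have h : m0 f a y z = _ :=
    Ezero f a hn hunique hassoc (fun j => if j = 0 then y else if j = n-1 then z else a)
  rw [rsplit1 hn] at h
  simp only [List.map_cons, List.map_append, List.foldr_cons, List.foldr_append,
    List.map_nil, List.foldr_nil, reduceIte] at h
  rw [foldr_const_a f a hn hunique (List.range' 1 (n-2)) _ ?hmid] at h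
  case hmid =>
    intro i hi
    rw [List.mem_range'_1] at hi
    show phi f a i (if i = 0 then y else if i = n-1 then z else a) = a
    rw [if_neg (by omega), if_neg (by omega), phi_a f a hn hunique]
  rw [show (if n-1 = 0 then y else z) = z from if_neg (by omega),
    phi_zero f a hn hunique] at h
  exact h

include hn hunique hassoc in
theorem MI (y z : G) :
    mulG f a (p f a 1 y) (mulG f a (phi f a 1 z) (bb f a)) = p f a 1 (m0 f a y z) := by
  have h8 := A8 f a hn hassoc y z
  have h := Ezero f a hn hunique hassoc
    (fun j => if j = 0 then p f a 1 y else if j = 1 then z else a)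
  rw [rsplit2 hn] at h
  simp only [List.map_cons, List.foldr_cons, reduceIte] at h
  rw [foldr_const_a f a hn hunique (List.range' 2 (n-2)) _ ?hmid] at h
  case hmid =>
    intro i hi
    rw [List.mem_range'_1] at hi
    show phi f a i (if i = 0 then p f a 1 y else if i = 1 then z else a) = a
    rw [if_neg (by omega), if_neg (by omega), phi_a f a hn hunique]
  rw [phi_zero f a hn hunique] at h
  exact h.symm.trans h8


include hn hunique hassoc in
theorem dagger (z : G) :
    mulG f a (bb f a) (phi f a 1 z) = mulG f a (phi f a 1 (phi f a (n-1) z)) (bb f a) := by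
  have h := MI f a hn hunique hassoc a z
  rw [p_a f a 1, m0_a_left f a hn, ← F1 f a hn hunique (n-1) z,
    ← F1 f a hn hunique 1 (mulG f a (phi f a (n-1) z) (bb f a)),
    ss f a hn hunique hassoc,
    ← mul_assoc' f a hn hunique hassoc (bb f a) (phi f a 1 z) (bb f a)] at h
  exact cancel_right f a hn hunique hassoc h

include hn hunique hassoc in
theorem th_mul (u w : G) :
    phi f a 1 (mulG f a u w) = mulG f a (phi f a 1 u) (phi f a 1 w) := by
  obtain ⟨z, rfl⟩ := (phi_bij f a hn hunique (n-1) (by omega)).2 w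
  have h := MI f a hn hunique hassoc u z
  rw [m0_expand f a hn hunique hassoc, ← F1 f a hn hunique 1 u,
    ← mul_assoc' f a hn hunique hassoc u (phi f a (n-1) z) (bb f a),
    ← F1 f a hn hunique 1 (mulG f a (mulG f a u (phi f a (n-1) z)) (bb f a)),
    ss f a hn hunique hassoc] at h
  -- h : mul (mul (th u) bb) (mul (th z) bb) = mul (mul (th (mul u (psi z))) bb) bb
  rw [mul_assoc' f a hn hunique hassoc (phi f a 1 u) (bb f a) (mulG f a (phi f a 1 z) (bb f a)),
    ← mul_assoc' f a hn hunique hassoc (bb f a) (phi f a 1 z) (bb f a),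
    dagger f a hn hunique hassoc z,
    ← mul_assoc' f a hn hunique hassoc (phi f a 1 u)
      (mulG f a (phi f a 1 (phi f a (n-1) z)) (bb f a)) (bb f a),
    ← mul_assoc' f a hn hunique hassoc (phi f a 1 u) (phi f a 1 (phi f a (n-1) z)) (bb f a)] at h
  -- h : mul (mul (mul (th u) (th (psi z))) bb) bb = mul (mul (th (mul u (psi z))) bb) bb
  have h2 := cancel_right f a hn hunique hassoc (cancel_right f a hn hunique hassoc h)
  exact h2.symm

include hn hunique hassoc in
theorem conj_iter (w : G) :
    (phi f a 1)^[n-1] w = mulG f a (mulG f a (bb f a) w) (invG f a (bb f a)) := by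
  obtain ⟨z, rfl⟩ := (phi_bij f a hn hunique 1 (by omega)).2 w
  have h := dagger f a hn hunique hassoc z
  have e1 : phi f a 1 (phi f a (n-1) z) = (phi f a 1)^[n-1] (phi f a 1 z) := by
    rw [phi_iter f a hn hunique hassoc (n-1) (by omega) z,
      ← Function.iterate_succ_apply' (phi f a 1) (n-1) z,
      Function.iterate_succ_apply (phi f a 1) (n-1) z]
  rw [e1] at h
  have h2 : mulG f a (mulG f a (bb f a) (phi f a 1 z)) (invG f a (bb f a)) =
      (phi f a 1)^[n-1] (phi f a 1 z) := by
    rw [h, mul_assoc' f a hn hunique hassoc, mul_inv f a hn hunique,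
      mul_a f a hn hunique hassoc]
  exact h2.symm

include hn hunique hassoc in
theorem final_formula (x : Fin n → G) :
    f x = (List.ofFn fun i : Fin n => (phi f a 1)^[(i : ℕ)] (x i)).foldr
      (mulG f a) (bb f a) := by
  have hx : f x = fw f (fun j => if h : j < n then x ⟨j, h⟩ else a) := by
    apply congrArg f
    funext k
    show x k = if h : (k : ℕ) < n then x ⟨(k : ℕ), h⟩ else a
    rw [dif_pos k.isLt]
  rw [hx, Ezero f a hn hunique hassoc]
  congr 1
  apply List.ext_getElem
  · rw [List.length_map, List.length_range', List.length_ofFn]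
  · intro i h1 h2
    rw [List.getElem_map, List.getElem_range', List.getElem_ofFn]
    have hi : i < n := by
      rw [List.length_map, List.length_range'] at h1
      omega
    have e1 : (0 + 1 * i) = i := by omega
    rw [e1, dif_pos hi, phi_iter f a hn hunique hassoc i hi]

end
end HosszuAux

/-- Hosszú–Gloskin theorem: every `n`-ary group `(G, f)` (with `n ≥ 2`) is
derived from an ordinary group: there are a group structure `(mul, one, inv)` on `G`,
an automorphism `θ` of this group, and an element `b ∈ G` such that `θ b = b`,
`θ^(n-1)` is conjugation by `b`, and
`f (x₁, …, xₙ) = x₁ * θ x₂ * θ² x₃ * ⋯ * θ^(n-1) xₙ * b`. -/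
theorem hosszu_gloskin {G : Type*} [Nonempty G] (n : ℕ) (hn : 2 ≤ n)
    (f : (Fin n → G) → G) (hassoc : PolyAssoc n f) (hunique : PolyUnique n f) :
    ∃ (mul : G → G → G) (one : G) (inv : G → G) (θ : G → G) (b : G),
      (∀ x y z : G, mul (mul x y) z = mul x (mul y z)) ∧
      (∀ x : G, mul one x = x) ∧ (∀ x : G, mul x one = x) ∧
      (∀ x : G, mul (inv x) x = one) ∧ (∀ x : G, mul x (inv x) = one) ∧
      Function.Bijective θ ∧ (∀ x y : G, θ (mul x y) = mul (θ x) (θ y)) ∧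
      θ b = b ∧
      (∀ x : G, θ^[n - 1] x = mul (mul b x) (inv b)) ∧
      (∀ x : Fin n → G,
        f x = (List.ofFn fun i : Fin n => θ^[(i : ℕ)] (x i)).foldr mul b) := by
  obtain ⟨a⟩ := ‹Nonempty G›
  exact ⟨HosszuAux.mulG f a, a, HosszuAux.invG f a, HosszuAux.phi f a 1, HosszuAux.bb f a,
    HosszuAux.mul_assoc' f a hn hunique hassoc,
    HosszuAux.a_mul f a hn hunique,
    HosszuAux.mul_a f a hn hunique hassoc,
    HosszuAux.inv_mul f a hn hunique hassoc,
    HosszuAux.mul_inv f a hn hunique,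
    HosszuAux.phi_bij f a hn hunique 1 (by omega),
    HosszuAux.th_mul f a hn hunique hassoc,
    HosszuAux.th_bb f a hn hunique hassoc,
    HosszuAux.conj_iter f a hn hunique hassoc,
    HosszuAux.final_formula f a hn hunique hassoc⟩
end

section
/- Let n ≥ 2 and let (G, f) be an n-ary group: f : Gⁿ → G is associative (for all 1 ≤ i < j ≤ n and all x₁, …, x_{2n-1} ∈ G, f(x₁, …, x_{i-1}, f(x_i, …, x_{n+i-1}), x_{n+i}, …, x_{2n-1}) = f(x₁, …, x_{j-1}, f(x_j, …, x_{n+j-1}), x_{n+j}, …, x_{2n-1})) and every equation f(a₁, …, a_{i-1}, x, a_{i+1}, …, aₙ) = c has a unique solution x for every position i. Fix a ∈ G and define the binary operation x • y = f(x, a, a, …, a, y) (with n-2 copies of a in the middle). Then (G, •) is a group: • is associative, and there exist an identity element and inverses for •. -/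
/-- Let `n ≥ 2` and let `(G, f)` be an `n`-ary group.  Fix `a ∈ G` and define
the retract operation `x • y = f (x, a, a, …, a, y)` (with `n - 2` copies of `a` in the
middle).  Then `(G, •)` is a group: `•` is associative, and it has an identity element and
inverses. -/
theorem retract_is_group {G : Type*} [Nonempty G] (n : ℕ) (hn : 2 ≤ n)
    (f : (Fin n → G) → G) (hassoc : PolyAssoc n f) (hunique : PolyUnique n f)
    (a : G) (op : G → G → G)
    (hop : ∀ x y : G, op x y =
      f (fun k : Fin n => if (k : ℕ) = 0 then x else if (k : ℕ) = n - 1 then y else a)) :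
    (∀ x y z : G, op (op x y) z = op x (op y z)) ∧
    ∃ e : G, (∀ x : G, op e x = x) ∧ (∀ x : G, op x e = x) ∧
      ∀ x : G, ∃ y : G, op x y = e ∧ op y x = e := by
  -- associativity
  have assoc : ∀ x y z : G, op (op x y) z = op x (op y z) := by
    intro x y z
    have h := hassoc 0 (n-1) (by omega) (by omega)
      (fun m => if m = 0 then x else if m = n - 1 then y else if m = 2*n - 2 then z else a)
    rw [hop (op x y) z, hop x (op y z), hop x y, hop y z]
    convert h using 2
    · funext k
      have hk := k.isLt
      split_ifs <;> first
        | rfl | omega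
        | (congr 1; funext l; have hl := l.isLt; split_ifs <;> first | rfl | omega)
    · funext k
      have hk := k.isLt
      split_ifs <;> first
        | rfl | omega
        | (congr 1; funext l; have hl := l.isLt; split_ifs <;> first | rfl | omega)
  -- solvability
  have exR : ∀ x c : G, ∃ y : G, op x y = c := by
    intro x c
    obtain ⟨y, hy, -⟩ := hunique ⟨n-1, by omega⟩ (fun k => if (k:ℕ) = 0 then x else a) c
    refine ⟨y, ?_⟩
    rw [hop]
    rw [show (fun k : Fin n => if (k:ℕ) = 0 then x else if (k:ℕ) = n-1 then y else a)
        = Function.update (fun k : Fin n => if (k:ℕ) = 0 then x else a) ⟨n-1, by omega⟩ y from ?_]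
    · exact hy
    · funext k
      have hk := k.isLt
      rw [Function.update_apply]
      simp only [Fin.ext_iff]
      try (split_ifs <;> first | rfl | omega)
  have exL : ∀ x c : G, ∃ y : G, op y x = c := by
    intro x c
    obtain ⟨y, hy, -⟩ := hunique ⟨0, by omega⟩ (fun k => if (k:ℕ) = n-1 then x else a) c
    refine ⟨y, ?_⟩
    rw [hop]
    rw [show (fun k : Fin n => if (k:ℕ) = 0 then y else if (k:ℕ) = n-1 then x else a)
        = Function.update (fun k : Fin n => if (k:ℕ) = n-1 then x else a) ⟨0, by omega⟩ y from ?_]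
    · exact hy
    · funext k
      have hk := k.isLt
      rw [Function.update_apply]
      simp only [Fin.ext_iff]
      try (split_ifs <;> first | rfl | omega)
  -- build group
  refine ⟨assoc, ?_⟩
  obtain ⟨b⟩ := ‹Nonempty G›
  obtain ⟨e, he⟩ := exR b b
  have hre : ∀ x : G, op x e = x := by
    intro x
    obtain ⟨u, hu⟩ := exL b x
    rw [← hu, assoc, he]
  obtain ⟨e', he'⟩ := exL b b
  have hle : ∀ x : G, op e' x = x := by
    intro x
    obtain ⟨v, hv⟩ := exR b x
    rw [← hv, ← assoc, he']
  have hee : e' = e := by rw [← hre e', hle e]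
  subst hee
  refine ⟨e', hle, hre, fun x => ?_⟩
  obtain ⟨y, hy⟩ := exR x e'
  obtain ⟨y', hy'⟩ := exL x e'
  have : y' = y := by rw [← hre y', ← hy, ← assoc, hy', hle]
  exact ⟨y, hy, this ▸ hy'⟩
end

section
/- Let n ≥ 2 and let (G, f) be an n-ary group (f : Gⁿ → G associative with unique solvability of equations in each position). For any two elements a, a′ ∈ G, the retract groups ret_a(G, f) and ret_{a′}(G, f) — i.e. G equipped with x • y = f(x, a, …, a, y) and with x ∗ y = f(x, a′, …, a′, y), respectively (each with n-2 copies of the fixed element in the middle) — are isomorphic as groups. -/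
namespace RetractsAux

variable {G : Type*}

/-- `a^{n-1} x` -/
def Aw (n : ℕ) (f : (Fin n → G) → G) (a : G) (x : G) : G :=
  f (fun k : Fin n => if (k : ℕ) = n - 1 then x else a)

/-- `a'^{n-2} z c` -/
def Dw (n : ℕ) (f : (Fin n → G) → G) (a' : G) (z c : G) : G :=
  f (fun k : Fin n => if (k : ℕ) = n - 2 then z else if (k : ℕ) = n - 1 then c else a')

lemma exD (n : ℕ) (hn : 2 ≤ n) (f : (Fin n → G) → G) (hunique : PolyUnique n f)
    (a a' : G) (c : G) : ∃! z : G, Dw n f a' z a = c := by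
  obtain ⟨z, hz, hz'⟩ := hunique ⟨n - 2, by omega⟩
    (fun k : Fin n => if (k : ℕ) = n - 1 then a else a') c
  have key : ∀ w : G,
      Function.update (fun k : Fin n => if (k : ℕ) = n - 1 then a else a')
        ⟨n - 2, by omega⟩ w
      = fun k : Fin n => if (k : ℕ) = n - 2 then w else if (k : ℕ) = n - 1 then a else a' := by
    intro w
    funext k
    have hk := k.isLt
    simp only [Function.update_apply, Fin.ext_iff]
    all_goals split_ifs <;> first | rfl | omega | (exfalso; omega)
  refine ⟨z, ?_, ?_⟩
  · show Dw n f a' z a = c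
    unfold Dw; rw [← key]; exact hz
  · intro w hw
    have hw' : Dw n f a' w a = c := hw
    unfold Dw at hw'
    rw [← key] at hw'
    exact hz' w hw'

lemma exA (n : ℕ) (hn : 2 ≤ n) (f : (Fin n → G) → G) (hunique : PolyUnique n f)
    (a : G) (c : G) : ∃! x : G, Aw n f a x = c := by
  obtain ⟨z, hz, hz'⟩ := hunique ⟨n - 1, by omega⟩ (fun _ => a) c
  have key : ∀ w : G,
      Function.update (fun _ : Fin n => a) ⟨n - 1, by omega⟩ w
      = fun k : Fin n => if (k : ℕ) = n - 1 then w else a := by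
    intro w
    funext k
    have hk := k.isLt
    simp only [Function.update_apply, Fin.ext_iff]
    all_goals split_ifs <;> first | rfl | omega | (exfalso; omega)
  refine ⟨z, ?_, ?_⟩
  · show Aw n f a z = c
    unfold Aw; rw [← key]; exact hz
  · intro w hw
    have hw' : Aw n f a w = c := hw
    unfold Aw at hw'
    rw [← key] at hw'
    exact hz' w hw'

lemma step1 (n : ℕ) (hn : 2 ≤ n) (f : (Fin n → G) → G) (hassoc : PolyAssoc n f)
    (a a' : G) (op' : G → G → G)
    (hop' : ∀ x y : G, op' x y =
      f (fun k : Fin n => if (k : ℕ) = 0 then x else if (k : ℕ) = n - 1 then y else a'))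
    (u v : G) :
    Dw n f a' (op' u v) a = Dw n f a' u (Dw n f a' v a) := by
  have h := hassoc (n - 2) (n - 1) (by omega) (by omega)
    (fun m => if m = n - 2 then u else if m = 2 * n - 3 then v
      else if m = 2 * n - 2 then a else a')
  rw [hop']
  unfold Dw
  have e1 : (fun k : Fin n =>
      if (k : ℕ) = n - 2 then
        f (fun k : Fin n => if (k : ℕ) = 0 then u else if (k : ℕ) = n - 1 then v else a')
      else if (k : ℕ) = n - 1 then a else a') =
      (fun k : Fin n =>
        if (k : ℕ) < n - 2 then
          (fun m => if m = n - 2 then u else if m = 2 * n - 3 then v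
            else if m = 2 * n - 2 then a else a') (k : ℕ)
        else if (k : ℕ) = n - 2 then
          f (fun l : Fin n => (fun m => if m = n - 2 then u else if m = 2 * n - 3 then v
            else if m = 2 * n - 2 then a else a') (n - 2 + (l : ℕ)))
        else (fun m => if m = n - 2 then u else if m = 2 * n - 3 then v
          else if m = 2 * n - 2 then a else a') ((k : ℕ) + n - 1)) := by
    funext k
    have hk := k.isLt
    simp only []
    split_ifs <;>
      first
      | rfl
      | omega
      | (exfalso; omega)
      | (congr 1; funext l; have hl := l.isLt;
         split_ifs <;> first | rfl | omega | (exfalso; omega))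
  have e2 : (fun k : Fin n =>
      if (k : ℕ) = n - 2 then u
      else if (k : ℕ) = n - 1 then
        f (fun k : Fin n => if (k : ℕ) = n - 2 then v else if (k : ℕ) = n - 1 then a else a')
      else a') =
      (fun k : Fin n =>
        if (k : ℕ) < n - 1 then
          (fun m => if m = n - 2 then u else if m = 2 * n - 3 then v
            else if m = 2 * n - 2 then a else a') (k : ℕ)
        else if (k : ℕ) = n - 1 then
          f (fun l : Fin n => (fun m => if m = n - 2 then u else if m = 2 * n - 3 then v
            else if m = 2 * n - 2 then a else a') (n - 1 + (l : ℕ)))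
        else (fun m => if m = n - 2 then u else if m = 2 * n - 3 then v
          else if m = 2 * n - 2 then a else a') ((k : ℕ) + n - 1)) := by
    funext k
    have hk := k.isLt
    simp only []
    split_ifs <;>
      first
      | rfl
      | omega
      | (exfalso; omega)
      | (congr 1; funext l; have hl := l.isLt;
         split_ifs <;> first | rfl | omega | (exfalso; omega))
  rw [e1, e2]
  exact h

lemma step2 (n : ℕ) (hn : 2 ≤ n) (f : (Fin n → G) → G) (hassoc : PolyAssoc n f)
    (a a' : G) (op : G → G → G)
    (hop : ∀ x y : G, op x y =
      f (fun k : Fin n => if (k : ℕ) = 0 then x else if (k : ℕ) = n - 1 then y else a))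
    (u y : G) :
    Dw n f a' u (Aw n f a y) = op (Dw n f a' u a) y := by
  have h := hassoc 0 (n - 1) (by omega) (by omega)
    (fun m => if m = n - 2 then u else if m = 2 * n - 2 then y
      else if m < n - 2 then a' else a)
  rw [hop]
  unfold Dw Aw
  have e1 : (fun k : Fin n =>
      if (k : ℕ) = n - 2 then u
      else if (k : ℕ) = n - 1 then
        f (fun k : Fin n => if (k : ℕ) = n - 1 then y else a)
      else a') =
      (fun k : Fin n =>
        if (k : ℕ) < n - 1 then
          (fun m => if m = n - 2 then u else if m = 2 * n - 2 then y
            else if m < n - 2 then a' else a) (k : ℕ)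
        else if (k : ℕ) = n - 1 then
          f (fun l : Fin n => (fun m => if m = n - 2 then u else if m = 2 * n - 2 then y
            else if m < n - 2 then a' else a) (n - 1 + (l : ℕ)))
        else (fun m => if m = n - 2 then u else if m = 2 * n - 2 then y
          else if m < n - 2 then a' else a) ((k : ℕ) + n - 1)) := by
    funext k
    have hk := k.isLt
    simp only []
    split_ifs <;>
      first
      | rfl
      | omega
      | (exfalso; omega)
      | (congr 1; funext l; have hl := l.isLt;
         split_ifs <;> first | rfl | omega | (exfalso; omega))
  have e2 : (fun k : Fin n =>
      if (k : ℕ) = 0 then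
        f (fun k : Fin n => if (k : ℕ) = n - 2 then u else if (k : ℕ) = n - 1 then a else a')
      else if (k : ℕ) = n - 1 then y else a) =
      (fun k : Fin n =>
        if (k : ℕ) < 0 then
          (fun m => if m = n - 2 then u else if m = 2 * n - 2 then y
            else if m < n - 2 then a' else a) (k : ℕ)
        else if (k : ℕ) = 0 then
          f (fun l : Fin n => (fun m => if m = n - 2 then u else if m = 2 * n - 2 then y
            else if m < n - 2 then a' else a) (0 + (l : ℕ)))
        else (fun m => if m = n - 2 then u else if m = 2 * n - 2 then y
          else if m < n - 2 then a' else a) ((k : ℕ) + n - 1)) := by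
    funext k
    have hk := k.isLt
    simp only []
    split_ifs <;>
      first
      | rfl
      | omega
      | (exfalso; omega)
      | (congr 1; funext l; have hl := l.isLt;
         split_ifs <;> first | rfl | omega | (exfalso; omega))
  rw [e1, e2]
  exact h.symm

lemma step3 (n : ℕ) (hn : 2 ≤ n) (f : (Fin n → G) → G) (hassoc : PolyAssoc n f)
    (a : G) (op : G → G → G)
    (hop : ∀ x y : G, op x y =
      f (fun k : Fin n => if (k : ℕ) = 0 then x else if (k : ℕ) = n - 1 then y else a))
    (x y : G) :
    op (Aw n f a x) y = Aw n f a (op x y) := by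
  have h := hassoc 0 (n - 1) (by omega) (by omega)
    (fun m => if m = n - 1 then x else if m = 2 * n - 2 then y else a)
  rw [hop x y, hop (Aw n f a x) y]
  unfold Aw
  have e1 : (fun k : Fin n =>
      if (k : ℕ) = 0 then
        f (fun k : Fin n => if (k : ℕ) = n - 1 then x else a)
      else if (k : ℕ) = n - 1 then y else a) =
      (fun k : Fin n =>
        if (k : ℕ) < 0 then
          (fun m => if m = n - 1 then x else if m = 2 * n - 2 then y else a) (k : ℕ)
        else if (k : ℕ) = 0 then
          f (fun l : Fin n =>
            (fun m => if m = n - 1 then x else if m = 2 * n - 2 then y else a) (0 + (l : ℕ)))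
        else (fun m => if m = n - 1 then x else if m = 2 * n - 2 then y else a)
          ((k : ℕ) + n - 1)) := by
    funext k
    have hk := k.isLt
    simp only []
    split_ifs <;>
      first
      | rfl
      | omega
      | (exfalso; omega)
      | (congr 1; funext l; have hl := l.isLt;
         split_ifs <;> first | rfl | omega | (exfalso; omega))
  have e2 : (fun k : Fin n =>
      if (k : ℕ) = n - 1 then
        f (fun k : Fin n => if (k : ℕ) = 0 then x else if (k : ℕ) = n - 1 then y else a)
      else a) =
      (fun k : Fin n =>
        if (k : ℕ) < n - 1 then
          (fun m => if m = n - 1 then x else if m = 2 * n - 2 then y else a) (k : ℕ)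
        else if (k : ℕ) = n - 1 then
          f (fun l : Fin n =>
            (fun m => if m = n - 1 then x else if m = 2 * n - 2 then y else a)
              (n - 1 + (l : ℕ)))
        else (fun m => if m = n - 1 then x else if m = 2 * n - 2 then y else a)
          ((k : ℕ) + n - 1)) := by
    funext k
    have hk := k.isLt
    simp only []
    split_ifs <;>
      first
      | rfl
      | omega
      | (exfalso; omega)
      | (congr 1; funext l; have hl := l.isLt;
         split_ifs <;> first | rfl | omega | (exfalso; omega))
  rw [e1, e2]
  exact h

end RetractsAux

/-- Let `n ≥ 2` and let `(G, f)` be an `n`-ary group.  For any `a, a' ∈ G`,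
the retracts `ret_a (G, f)` and `ret_{a'} (G, f)` — `G` with `x • y = f (x, a, …, a, y)`
and `x ∗ y = f (x, a', …, a', y)` respectively (`n - 2` copies of the fixed element in the
middle) — are isomorphic as groups: there is a multiplication-preserving bijection
`φ : (G, •) → (G, ∗)`. -/
theorem retracts_isomorphic {G : Type*} [Nonempty G] (n : ℕ) (hn : 2 ≤ n)
    (f : (Fin n → G) → G) (hassoc : PolyAssoc n f) (hunique : PolyUnique n f)
    (a a' : G) (op op' : G → G → G)
    (hop : ∀ x y : G, op x y =
      f (fun k : Fin n => if (k : ℕ) = 0 then x else if (k : ℕ) = n - 1 then y else a))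
    (hop' : ∀ x y : G, op' x y =
      f (fun k : Fin n => if (k : ℕ) = 0 then x else if (k : ℕ) = n - 1 then y else a')) :
    ∃ φ : G → G, Function.Bijective φ ∧ ∀ x y : G, φ (op x y) = op' (φ x) (φ y) := by
  classical
  set φ : G → G := fun x => (RetractsAux.exD n hn f hunique a a' (RetractsAux.Aw n f a x)).choose
    with hφdef
  have hφ : ∀ x, RetractsAux.Dw n f a' (φ x) a = RetractsAux.Aw n f a x := fun x =>
    (RetractsAux.exD n hn f hunique a a' (RetractsAux.Aw n f a x)).choose_spec.1
  have hφu : ∀ x z, RetractsAux.Dw n f a' z a = RetractsAux.Aw n f a x → z = φ x := fun x z h =>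
    (RetractsAux.exD n hn f hunique a a' (RetractsAux.Aw n f a x)).choose_spec.2 z h
  set ψ : G → G := fun y =>
    (RetractsAux.exA n hn f hunique a (RetractsAux.Dw n f a' y a)).choose with hψdef
  have hψ : ∀ y, RetractsAux.Aw n f a (ψ y) = RetractsAux.Dw n f a' y a := fun y =>
    (RetractsAux.exA n hn f hunique a (RetractsAux.Dw n f a' y a)).choose_spec.1
  have hψu : ∀ y x, RetractsAux.Aw n f a x = RetractsAux.Dw n f a' y a → x = ψ y := fun y x h =>
    (RetractsAux.exA n hn f hunique a (RetractsAux.Dw n f a' y a)).choose_spec.2 x h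
  refine ⟨φ, ?_, ?_⟩
  · refine Function.bijective_iff_has_inverse.2 ⟨ψ, fun x => ?_, fun y => ?_⟩
    · exact (hψu (φ x) x (by rw [hφ])).symm
    · exact (hφu (ψ y) y (by rw [hψ])).symm
  · intro x y
    refine (hφu (op x y) (op' (φ x) (φ y)) ?_).symm
    calc RetractsAux.Dw n f a' (op' (φ x) (φ y)) a
        = RetractsAux.Dw n f a' (φ x) (RetractsAux.Dw n f a' (φ y) a) :=
          RetractsAux.step1 n hn f hassoc a a' op' hop' _ _
      _ = RetractsAux.Dw n f a' (φ x) (RetractsAux.Aw n f a y) := by rw [hφ]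
      _ = op (RetractsAux.Dw n f a' (φ x) a) y :=
          RetractsAux.step2 n hn f hassoc a a' op hop _ _
      _ = op (RetractsAux.Aw n f a x) y := by rw [hφ]
      _ = RetractsAux.Aw n f a (op x y) :=
          RetractsAux.step3 n hn f hassoc a op hop _ _
end

section
/- (Post cover theorem, existence.) Let n ≥ 2 and let (G, f) be an n-ary group (f : Gⁿ → G associative with unique solvability of equations in each position). Then there exist a group (G*, ∘), an injective map ι : G → G*, and a normal subgroup K of G* such that: (1) ι(G) is a left coset of K in G*; (2) the quotient group G*/K is cyclic of order n-1; (3) for all x₁, …, xₙ ∈ G, ι(f(x₁, …, xₙ)) = ι(x₁) ∘ ι(x₂) ∘ ⋯ ∘ ι(xₙ); (4) ι(G) generates G* as a group. -/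
open Pointwise

universe u

namespace PostCoverAux

variable {G : Type u}

def fA (n : ℕ) (f : (Fin n → G) → G) (x : ℕ → G) : G := f fun i : Fin n => x i

def shf (i : ℕ) (x : ℕ → G) : ℕ → G := fun t => x (i + t)

def colW (n : ℕ) (f : (Fin n → G) → G) (i : ℕ) (x : ℕ → G) : ℕ → G := fun k =>
  if k < i then x k else if k = i then fA n f (shf i x) else x (k + n - 1)

theorem assoc' {n : ℕ} {f : (Fin n → G) → G} (ha : PolyAssoc n f) {i j : ℕ}
    (hij : i < j) (hjn : j < n) (x : ℕ → G) :
    fA n f (colW n f i x) = fA n f (colW n f j x) := ha i j hij hjn x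

theorem fA_congr {n : ℕ} {f : (Fin n → G) → G} {x y : ℕ → G}
    (h : ∀ t, t < n → x t = y t) : fA n f x = fA n f y := by
  unfold fA; congr 1; funext i; exact h i i.2

def splice (p : ℕ) (u v : ℕ → G) : ℕ → G := fun t => if t < p then u t else v (t - p)

def cns (g : G) (s : ℕ → G) : ℕ → G := fun t => if t = 0 then g else s (t - 1)

/-- the word `(g, a, …, a, h)` of length `n` -/
def mw (n : ℕ) (a g h : G) : ℕ → G := fun t => if t = 0 then g else if t = n - 1 then h else a

theorem mul_solv {n : ℕ} {f : (Fin n → G) → G} (hn : 2 ≤ n) (hu : PolyUnique n f)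
    (a c w : G) : ∃ x : G, fA n f (mw n a x c) = w := by
  obtain ⟨x, hx, -⟩ := hu ⟨0, by omega⟩ (fun i => if (i : ℕ) = n - 1 then c else a) w
  refine ⟨x, ?_⟩
  have hfe : (fun i : Fin n => mw n a x c (i : ℕ)) =
      Function.update (fun i : Fin n => if (i : ℕ) = n - 1 then c else a) ⟨0, by omega⟩ x := by
    funext i
    rw [Function.update_apply]
    rcases i with ⟨iv, hiv⟩
    by_cases h0 : iv = 0 <;> simp [mw, h0, Fin.ext_iff]
  show f (fun i : Fin n => mw n a x c (i : ℕ)) = w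
  rw [hfe]; exact hx

theorem transfer {n : ℕ} {f : (Fin n → G) → G} (hn : 2 ≤ n) (ha : PolyAssoc n f)
    (hu : PolyUnique n f) (a : G) :
    ∀ p : ℕ, p + 1 ≤ n → ∀ τ τ' α : ℕ → G,
      fA n f (splice p α τ) = fA n f (splice p α τ') →
      ∀ β : ℕ → G, fA n f (splice p β τ) = fA n f (splice p β τ') := by
  intro p
  induction p with
  | zero =>
    intro _ τ τ' α h β
    have e0 : ∀ (γ : ℕ → G) (s : ℕ → G), splice 0 γ s = s := by
      intro γ s; funext t; simp [splice]
    simp only [e0] at h ⊢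
    exact h
  | succ p ih =>
    intro hpn τ τ' α h β
    have hsp : ∀ (γ s : ℕ → G), splice (p+1) γ s = splice p γ (cns (γ p) s) := by
      intro γ s; funext t
      simp only [splice, cns]
      rcases Nat.lt_trichotomy t p with ht | rfl | ht
      · simp [show t < p + 1 by omega, ht]
      · simp
      · have h3 : t - p ≠ 0 := by omega
        simp [show ¬ t < p + 1 by omega, show ¬ t < p by omega, h3]
        all_goals (congr 1 <;> omega)
    rw [hsp α τ, hsp α τ'] at h
    rw [hsp β τ, hsp β τ']
    set c := α p with hc
    have Hc : ∀ γ : ℕ → G, fA n f (splice p γ (cns c τ)) = fA n f (splice p γ (cns c τ')) :=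
      ih (by omega) (cns c τ) (cns c τ') α h
    set w := β p with hw
    obtain ⟨ν₀, hν⟩ := mul_solv hn hu a c w
    set mid : (ℕ → G) → ℕ → G := fun s t =>
      if t = 0 then ν₀ else if t < n - 1 then a else if t = n - 1 then c else s (t - n) with hmid
    have midlow : ∀ s s' : ℕ → G, ∀ t, t < n - 1 → mid s t = mid s' t := by
      intro s s' t ht
      by_cases h0 : t = 0 <;> simp [hmid, h0, ht]
    have midn : ∀ s : ℕ → G, ∀ t, t < n → mid s t = mw n a ν₀ c t := by
      intro s t ht
      rcases Nat.lt_trichotomy t (n-1) with h1 | rfl | h1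
      · by_cases h0 : t = 0
        · simp [hmid, mw, h0, show ¬ ((0:ℕ) = n - 1) by omega]
        · simp [hmid, mw, h0, h1, show ¬ (t = n-1) by omega]
      · simp [hmid, mw, show ¬ (n - 1 = 0) by omega]
      · omega
    have midfa : ∀ s : ℕ → G, fA n f (mid s) = w := by
      intro s; rw [← hν]; exact fA_congr (fun t ht => midn s t ht)
    rcases Nat.eq_zero_or_pos p with rfl | hp
    · -- p = 0 : windows 0 and n-1 on the word `mid s`
      have sp0 : ∀ (γ : ℕ → G) (s : ℕ → G), splice 0 γ s = s := by
        intro γ s; funext t; simp [splice]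
      rw [sp0 β (cns w τ), sp0 β (cns w τ')]
      have key : ∀ s : ℕ → G, colW n f 0 (mid s) = cns w s := by
        intro s; funext t
        rcases Nat.eq_zero_or_pos t with rfl | ht
        · have hs : shf 0 (mid s) = mid s := by funext t'; simp [shf]
          simp [colW, cns, hs, midfa s]
        · simp [colW, cns, hmid, show ¬ t < 0 by omega, show ¬ (t = 0) by omega,
            show ¬ (t + n - 1 = 0) by omega, show ¬ (t + n - 1 < n - 1) by omega,
            show ¬ (t + n - 1 = n - 1) by omega]
          all_goals (congr 1 <;> omega)
      have tail : ∀ s : ℕ → G, shf (n-1) (mid s) = cns c s := by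
        intro s; funext t
        rcases Nat.eq_zero_or_pos t with rfl | ht
        · simp [shf, cns, hmid, show ¬ (n - 1 = 0) by omega]
        · simp [shf, cns, hmid, show ¬ (t = 0) by omega, show ¬ (n - 1 + t = 0) by omega,
            show ¬ (n - 1 + t < n - 1) by omega, show ¬ (n - 1 + t = n - 1) by omega]
          all_goals (congr 1 <;> omega)
      have hc2 : fA n f (cns c τ) = fA n f (cns c τ') := by
        have h5 := Hc (fun _ => a)
        simpa only [sp0] using h5
      calc fA n f (cns w τ) = fA n f (colW n f 0 (mid τ)) := by rw [key]
        _ = fA n f (colW n f (n-1) (mid τ)) := assoc' ha (by omega) (by omega) _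
        _ = fA n f (colW n f (n-1) (mid τ')) := by
            apply fA_congr; intro t ht
            rcases Nat.lt_trichotomy t (n-1) with h1 | rfl | h1
            · simp only [colW, if_pos h1]; exact midlow τ τ' t h1
            · simp [colW, tail, hc2]
            · omega
        _ = fA n f (colW n f 0 (mid τ')) := (assoc' ha (by omega) (by omega) _).symm
        _ = fA n f (cns w τ') := by rw [key]
    · -- p ≥ 1 : windows 0 and p on the word `splice p β (mid s)`
      have key : ∀ s : ℕ → G, colW n f p (splice p β (mid s)) = splice p β (cns w s) := by
        intro s; funext t
        rcases Nat.lt_trichotomy t p with h1 | heq | h1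
        · simp [colW, splice, cns, h1]
        · have hshift : shf p (splice p β (mid s)) = mid s := by
            funext t'
            simp [shf, splice, show ¬ p + t' < p by omega]
            all_goals (congr 1 <;> omega)
          simp [colW, splice, cns, heq, hshift, midfa s]
        · simp [colW, splice, cns, show ¬ t < p by omega, show ¬ (t = p) by omega,
            show ¬ (t + n - 1 < p) by omega, show ¬ (t - p = 0) by omega,
            hmid, show ¬ (t + n - 1 - p = 0) by omega, show ¬ (t + n - 1 - p < n - 1) by omega,
            show ¬ (t + n - 1 - p = n - 1) by omega]
          all_goals (congr 1 <;> omega)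
      set g0 : G := fA n f (shf 0 (splice p β (mid τ))) with hg0
      have g0eq : ∀ s : ℕ → G, fA n f (shf 0 (splice p β (mid s))) = g0 := by
        intro s; rw [hg0]
        apply fA_congr; intro t ht
        by_cases h1 : t < p
        · simp [shf, splice, h1]
        · simp [shf, splice, h1]
          exact midlow s τ (t - p) (by omega)
      have key0 : ∀ s : ℕ → G,
          colW n f 0 (splice p β (mid s)) = splice p (cns g0 (fun _ => a)) (cns c s) := by
        intro s; funext t
        rcases Nat.eq_zero_or_pos t with rfl | ht
        · simp [colW, splice, cns, hp, g0eq s]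
        · rcases Nat.lt_trichotomy t p with h1 | heq | h1
          · simp [colW, splice, cns, show ¬ t < 0 by omega, show ¬ (t = 0) by omega,
              show ¬ (t + n - 1 < p) by omega, h1, hmid,
              show ¬ (t + n - 1 - p = 0) by omega, show t + n - 1 - p < n - 1 by omega]
          · simp [colW, splice, cns, heq, show ¬ p < 0 by omega, show ¬ (p = 0) by omega,
              show ¬ (p + n - 1 < p) by omega, hmid, show ¬ (n - 1 = 0) by omega,
              show ¬ (p + n - 1 - p = 0) by omega, show ¬ (p + n - 1 - p < n - 1) by omega,
              show p + n - 1 - p = n - 1 by omega]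
          · simp [colW, splice, cns, show ¬ t < 0 by omega, show ¬ (t = 0) by omega,
              show ¬ (t + n - 1 < p) by omega, show ¬ t < p by omega, show ¬ (t - p = 0) by omega,
              hmid, show ¬ (t + n - 1 - p = 0) by omega, show ¬ (t + n - 1 - p < n - 1) by omega,
              show ¬ (t + n - 1 - p = n - 1) by omega]
            all_goals (congr 1 <;> omega)
      calc fA n f (splice p β (cns w τ))
          = fA n f (colW n f p (splice p β (mid τ))) := by rw [key]
        _ = fA n f (colW n f 0 (splice p β (mid τ))) := (assoc' ha hp (by omega) _).symm
        _ = fA n f (splice p (cns g0 (fun _ => a)) (cns c τ)) := by rw [key0]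
        _ = fA n f (splice p (cns g0 (fun _ => a)) (cns c τ')) := Hc _
        _ = fA n f (colW n f 0 (splice p β (mid τ'))) := by rw [key0]
        _ = fA n f (colW n f p (splice p β (mid τ'))) := assoc' ha hp (by omega) _
        _ = fA n f (splice p β (cns w τ')) := by rw [key]

end PostCoverAux

namespace PostCoverAux

variable {G : Type u}

/-- the word `(a,…,a,w,a,…,a,1)` with `w` in position `k-1` -/
def hkW (n : ℕ) [One G] (a : G) (k : ℕ) (w : G) : ℕ → G := fun t =>
  if t = k - 1 then w else if t = n - 1 then 1 else a

def hkf (n : ℕ) (f : (Fin n → G) → G) [One G] (a : G) (k : ℕ) (w : G) : G :=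
  fA n f (hkW n a k w)

def psif (n : ℕ) (f : (Fin n → G) → G) [Group G] (a : G) (k : ℕ) (w : G) : G :=
  a⁻¹ * hkf n f a k w

/-- the word `(a,…,a,w,a,…,a,u)` with `w` in position `k-1` and `u` last -/
def gW (n : ℕ) (a : G) (k : ℕ) (w u : G) : ℕ → G := fun t =>
  if t = k - 1 then w else if t = n - 1 then u else a

def VWd (n : ℕ) [Mul G] (ψ : ℕ → G → G) (x : ℕ → G) : ℕ → G := fun j =>
  Nat.rec (x (n-1)) (fun j ih => ψ (n-1-j) (x (n-1-j-1)) * ih) j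

@[simp] theorem VWd_zero (n : ℕ) [Mul G] (ψ : ℕ → G → G) (x : ℕ → G) :
    VWd n ψ x 0 = x (n-1) := rfl

theorem VWd_succ (n : ℕ) [Mul G] (ψ : ℕ → G → G) (x : ℕ → G) (j : ℕ) :
    VWd n ψ x (j+1) = ψ (n-1-j) (x (n-1-j-1)) * VWd n ψ x j := rfl

theorem VWd_ext (n : ℕ) [Mul G] (ψ : ℕ → G → G) {x y : ℕ → G} :
    ∀ j, (∀ t, n-1-j ≤ t → t ≤ n-1 → x t = y t) → VWd n ψ x j = VWd n ψ y j := by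
  intro j
  induction j with
  | zero => intro h; simp only [VWd_zero]; exact h (n-1) (by omega) (by omega)
  | succ j ih =>
    intro h
    rw [VWd_succ, VWd_succ, h (n-1-j-1) (by omega) (by omega),
      ih (fun t h1 h2 => h t (by omega) h2)]

section Dev

variable {n : ℕ} {f : (Fin n → G) → G}

theorem upd_eq_word {k : ℕ} (hk : k < n) (base : Fin n → G) (w : G)
    (word : ℕ → G) (hw : ∀ t (ht : t < n), t ≠ k → word t = base ⟨t, ht⟩)
    (hwk : word k = w) :
    (fun i : Fin n => word (i : ℕ)) = Function.update base ⟨k, hk⟩ w := by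
  funext i
  rw [Function.update_apply]
  rcases i with ⟨iv, hiv⟩
  by_cases h0 : iv = k
  · subst h0; simp [hwk]
  · rw [if_neg (by simp [Fin.ext_iff, h0]), hw iv hiv h0]

theorem hkf_bij (hn : 2 ≤ n) (hu : PolyUnique n f) [One G] (a : G) {k : ℕ}
    (h1 : 1 ≤ k) (h2 : k ≤ n - 1) : Function.Bijective (hkf n f a k) := by
  rw [Function.bijective_iff_existsUnique]
  intro c
  obtain ⟨x, hx, hun⟩ := hu ⟨k-1, by omega⟩
    (fun i => if (i : ℕ) = n - 1 then 1 else a) c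
  have hrw : ∀ w : G, hkf n f a k w =
      f (Function.update (fun i : Fin n => if (i : ℕ) = n - 1 then 1 else a) ⟨k-1, by omega⟩ w) := by
    intro w
    show f _ = _
    congr 1
    refine upd_eq_word (by omega) _ w (hkW n a k w) (fun t ht htk => ?_) (by simp [hkW])
    simp only [hkW, if_neg htk]
  refine ⟨x, ?_, fun y hy => hun y ?_⟩
  · show hkf n f a k x = c
    rw [hrw]; exact hx
  · show f (Function.update (fun i : Fin n => if (i : ℕ) = n - 1 then 1 else a)
      ⟨k-1, by omega⟩ y) = c
    rw [← hrw]
    exact hy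

theorem glem (hn : 2 ≤ n) (ha : PolyAssoc n f) [Group G] (a : G)
    (hmulb : ∀ g h : G, g * h = fA n f (mw n a g h)) {k : ℕ}
    (h1 : 1 ≤ k) (h2 : k ≤ n - 1) (w u : G) :
    fA n f (gW n a k w u) = hkf n f a k w * u := by
  set LW : ℕ → G := fun t =>
    if t = k - 1 then w else if t = n - 1 then 1 else if t = 2*n - 2 then u else a with hLW
  have e0 : colW n f 0 LW = mw n a (hkf n f a k w) u := by
    funext t
    rcases Nat.eq_zero_or_pos t with rfl | ht
    · have : fA n f (shf 0 LW) = hkf n f a k w := by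
        apply fA_congr; intro t ht
        simp only [shf, Nat.zero_add, hLW, hkW]
        by_cases hb : t = k - 1
        · simp [hb]
        · simp [hb, show ¬ (t = 2*n-2) by omega]
      simp [colW, mw, this]
    · by_cases hb : t = n - 1
      · simp [colW, mw, hLW, show ¬ (t = 0) by omega, hb,
          show n - 1 + n - 1 = 2*n-2 by omega, show ¬ (2*n-2 = k-1) by omega,
          show ¬ (2*n-2 = n-1) by omega, show ¬ ((n:ℕ)-1 = 0) by omega,
          show ¬ ((n:ℕ)-1 < 0) by omega]
      · simp [colW, mw, hLW, show ¬ (t < 0) by omega, show ¬ (t = 0) by omega, hb,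
          show ¬ (t + n - 1 = k-1) by omega, show ¬ (t + n - 1 = n-1) by omega,
          show ¬ (t + n - 1 = 2*n-2) by omega]
  have e1 : colW n f (n-1) LW = gW n a k w u := by
    funext t
    rcases Nat.lt_trichotomy t (n-1) with h3 | h3 | h3
    · by_cases hb : t = k - 1
      · subst hb
        simp [colW, gW, hLW, h3]
      · simp [colW, gW, hLW, h3, hb, show ¬ (t = n-1) by omega,
          show ¬ (t = 2*n-2) by omega]
    · have : fA n f (shf (n-1) LW) = u := by
        have h4 : fA n f (shf (n-1) LW) = fA n f (mw n a 1 u) := by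
          apply fA_congr; intro t ht
          simp only [shf, hLW, mw]
          rcases Nat.eq_zero_or_pos t with rfl | ht0
          · simp [show n - 1 + 0 = n - 1 by omega, show ¬ (n-1 = k-1) by omega]
          · by_cases hb : t = n - 1
            · simp [hb, show n - 1 + (n-1) = 2*n-2 by omega,
                show ¬ (2*n-2 = k-1) by omega, show ¬ (2*n-2 = n-1) by omega,
                show ¬ ((n:ℕ) - 1 = 0) by omega]
            · simp [hb, show ¬ (n - 1 + t = k - 1) by omega,
                show ¬ (n - 1 + t = n - 1) by omega, show ¬ (n - 1 + t = 2*n-2) by omega,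
                show ¬ (t = 0) by omega]
        rw [h4, ← hmulb, one_mul]
      simp [colW, gW, h3, show ¬ ((n:ℕ)-1 < n-1) by omega,
        show ¬ ((n:ℕ)-1 = k-1) by omega, this]
    · simp [colW, gW, hLW, show ¬ (t < n-1) by omega, show ¬ (t = n-1) by omega,
        show ¬ (t = k-1) by omega, show ¬ (t + n - 1 = k-1) by omega,
        show ¬ (t + n - 1 = n-1) by omega, show ¬ (t + n - 1 = 2*n-2) by omega]
  calc fA n f (gW n a k w u) = fA n f (colW n f (n-1) LW) := by rw [e1]
    _ = fA n f (colW n f 0 LW) := (assoc' ha (by omega) (by omega) _).symm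
    _ = fA n f (mw n a (hkf n f a k w) u) := by rw [e0]
    _ = hkf n f a k w * u := (hmulb _ _).symm

theorem splice_shf {k : ℕ} {x y : ℕ → G} (h : ∀ t, t < k → y t = x t) :
    splice k x (shf k y) = y := by
  funext t
  simp only [splice, shf]
  by_cases h1 : t < k
  · simp [h1, h t h1]
  · have ht2 : k + (t - k) = t := by omega
    rw [if_neg h1, ht2]

theorem star (hn : 2 ≤ n) (ha : PolyAssoc n f) (hu : PolyUnique n f) [Group G] (a : G)
    (hmulb : ∀ g h : G, g * h = fA n f (mw n a g h)) (x : ℕ → G) :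
    fA n f x = x 0 * VWd n (psif n f a) x (n-2) := by
  set ψ := psif n f a with hψ
  set Cw : ℕ → ℕ → G := fun k t =>
    if t < k then x t else if t < n - 1 then a else if t = n - 1 then VWd n ψ x (n-1-k) else a
    with hCw
  have main : ∀ d, d ≤ n - 2 → fA n f x = fA n f (Cw (n-1-d)) := by
    intro d
    induction d with
    | zero =>
      intro _
      apply fA_congr
      intro t ht
      rcases Nat.lt_trichotomy t (n-1) with h3 | h3 | h3
      · simp [hCw, h3, show n - 1 - 0 = n - 1 by omega]
      · simp [hCw, h3, show ¬ (n-1 < n-1-0) by omega, show ¬ ((n:ℕ)-1 < n-1) by omega,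
          show n - 1 - 0 = n-1 by omega, show n-1-(n-1) = 0 by omega]
      · omega
    | succ d ih =>
      intro hd
      rw [ih (by omega)]
      set k := n - 2 - d with hkk
      have hk1 : 1 ≤ k := by omega
      have e1 : n - 1 - d = k + 1 := by omega
      have e2 : n - 1 - (d+1) = k := by omega
      rw [e1, e2]
      -- transfer from the all-`a` prefix
      have hwit : fA n f (splice k (fun _ => a) (shf k (Cw (k+1)))) =
          fA n f (splice k (fun _ => a) (shf k (Cw k))) := by
        have w1 : splice k (fun _ => a) (shf k (Cw (k+1))) =
            gW n a (k+1) (x k) (VWd n ψ x (n-2-k)) := by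
          funext t
          simp only [splice, shf, gW, hCw]
          rcases Nat.lt_trichotomy t k with h3 | h3 | h3
          · simp [h3, show ¬ (t = k) by omega, show ¬ (t = n-1) by omega]
          · subst h3
            simp
          · have ht : k + (t - k) = t := by omega
            rw [if_neg (by omega), ht]
            rcases Nat.lt_trichotomy t (n-1) with h4 | h4 | h4
            · simp [show ¬ (t < k+1) by omega, h4, show ¬ (t = k) by omega,
                show ¬ (t = n-1) by omega]
            · subst h4
              simp [show ¬ ((n:ℕ)-1 < k+1) by omega, show ¬ ((n:ℕ)-1 < n-1) by omega,
                show ¬ ((n:ℕ)-1 = k) by omega, show n-1-(k+1) = n-2-k by omega]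
            · simp [show ¬ (t < k+1) by omega, show ¬ (t < n-1) by omega,
                show ¬ (t = n-1) by omega, show ¬ (t = k) by omega]
        have w2 : splice k (fun _ => a) (shf k (Cw k)) = mw n a a (VWd n ψ x (n-1-k)) := by
          funext t
          simp only [splice, shf, mw, hCw]
          by_cases h3 : t < k
          · simp [h3, show ¬ (t = n-1) by omega]
          · have ht : k + (t - k) = t := by omega
            rw [if_neg h3, ht]
            rcases Nat.lt_trichotomy t (n-1) with h4 | h4 | h4
            · simp [h3, h4, show ¬ (t = n-1) by omega]
            · subst h4
              simp [show ¬ ((n:ℕ)-1 < k) by omega, show ¬ ((n:ℕ)-1 < n-1) by omega,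
                show ¬ ((n:ℕ)-1 = 0) by omega]
            · simp [h3, show ¬ (t < n-1) by omega, show ¬ (t = n-1) by omega,
                show ¬ (t = 0) by omega]
        rw [w1, w2, glem hn ha a hmulb (by omega) (by omega), ← hmulb]
        have e3 : VWd n ψ x (n-1-k) = ψ (k+1) (x k) * VWd n ψ x (n-2-k) := by
          rw [show n-1-k = (n-2-k)+1 by omega, VWd_succ,
            show n-1-(n-2-k) = k+1 by omega, Nat.add_sub_cancel]
        rw [e3, hψ]
        simp [psif, mul_assoc]
      have tr := transfer hn ha hu a k (by omega) (shf k (Cw (k+1))) (shf k (Cw k))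
        (fun _ => a) hwit x
      rwa [splice_shf (fun t ht => by simp [hCw, show t < k + 1 by omega, ht]),
        splice_shf (fun t ht => by simp [hCw, ht])] at tr
  have h1 := main (n-2) (le_refl _)
  rw [h1]
  have : Cw (n-1-(n-2)) = mw n a (x 0) (VWd n ψ x (n-2)) := by
    funext t
    simp only [hCw, mw, show n-1-(n-2) = 1 by omega]
    rcases Nat.lt_trichotomy t (n-1) with h3 | h3 | h3
    · by_cases h0 : t = 0
      · simp [h0, show (0:ℕ) < 1 by omega]
      · simp [h0, h3, show ¬ (t < 1) by omega, show ¬ (t = n-1) by omega]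
    · simp [h3, show ¬ ((n:ℕ)-1 < 1) by omega, show ¬ ((n:ℕ)-1 < n-1) by omega,
        show ¬ ((n:ℕ)-1 = 0) by omega, show n-1-1 = n-2 by omega]
    · simp [show ¬ (t < 1) by omega, show ¬ (t < n-1) by omega, show ¬ (t = n-1) by omega,
        show ¬ (t = 0) by omega]
  rw [this, ← hmulb]

end Dev
end PostCoverAux

namespace PostCoverAux

variable {G : Type u}

section Dev2

variable {n : ℕ} {f : (Fin n → G) → G}

theorem mul_solv' (hn : 2 ≤ n) (hu : PolyUnique n f) (a c w : G) :
    ∃ y : G, fA n f (mw n a c y) = w := by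
  obtain ⟨y, hy, -⟩ := hu ⟨n-1, by omega⟩ (fun i => if (i : ℕ) = 0 then c else a) w
  refine ⟨y, ?_⟩
  show f _ = w
  rw [show (fun i : Fin n => mw n a c y (i : ℕ)) =
    Function.update (fun i : Fin n => if (i : ℕ) = 0 then c else a) ⟨n-1, by omega⟩ y from ?_]
  · exact hy
  · refine upd_eq_word (by omega) _ y (mw n a c y) (fun t ht htk => ?_) ?_
    · simp only [mw, if_neg htk]
    · simp [mw, show ¬ ((n:ℕ) - 1 = 0) by omega]

theorem mul_assoc_raw (hn : 2 ≤ n) (ha : PolyAssoc n f) (a g h k : G) :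
    fA n f (mw n a (fA n f (mw n a g h)) k) = fA n f (mw n a g (fA n f (mw n a h k))) := by
  set MW : ℕ → G := fun t =>
    if t = 0 then g else if t = n - 1 then h else if t = 2*n - 2 then k else a with hMW
  have e0 : colW n f 0 MW = mw n a (fA n f (mw n a g h)) k := by
    funext t
    rcases Nat.eq_zero_or_pos t with rfl | ht
    · have hx : fA n f (shf 0 MW) = fA n f (mw n a g h) := by
        apply fA_congr; intro t ht
        simp only [shf, Nat.zero_add, hMW, mw]
        by_cases hb : t = 0
        · simp [hb]
        · simp [hb, show ¬ (t = 2*n-2) by omega]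
      simp [colW, mw, hx]
    · by_cases hb : t = n - 1
      · simp [colW, mw, hMW, show ¬ (t = 0) by omega, hb,
          show n - 1 + n - 1 = 2*n-2 by omega, show ¬ (2*n-2 = 0) by omega,
          show ¬ (2*n-2 = n-1) by omega, show ¬ ((n:ℕ)-1 = 0) by omega,
          show ¬ ((n:ℕ)-1 < 0) by omega]
      · simp [colW, mw, hMW, show ¬ (t < 0) by omega, show ¬ (t = 0) by omega, hb,
          show ¬ (t + n - 1 = 0) by omega, show ¬ (t + n - 1 = n-1) by omega,
          show ¬ (t + n - 1 = 2*n-2) by omega]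
  have e1 : colW n f (n-1) MW = mw n a g (fA n f (mw n a h k)) := by
    funext t
    rcases Nat.lt_trichotomy t (n-1) with h3 | h3 | h3
    · by_cases hb : t = 0
      · simp [colW, mw, hMW, h3, hb, show (0:ℕ) < n - 1 by omega]
      · simp [colW, mw, hMW, h3, hb, show ¬ (t = n-1) by omega,
          show ¬ (t = 2*n-2) by omega]
    · have hx : fA n f (shf (n-1) MW) = fA n f (mw n a h k) := by
        apply fA_congr; intro t ht
        simp only [shf, hMW, mw]
        rcases Nat.eq_zero_or_pos t with rfl | ht0
        · simp [show n - 1 + 0 = n - 1 by omega, show ¬ ((n:ℕ)-1 = 0) by omega]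
        · by_cases hb : t = n - 1
          · simp [hb, show n - 1 + (n-1) = 2*n-2 by omega,
              show ¬ (2*n-2 = 0) by omega, show ¬ (2*n-2 = n-1) by omega,
              show ¬ ((n:ℕ) - 1 = 0) by omega]
          · simp [hb, show ¬ (n - 1 + t = 0) by omega,
              show ¬ (n - 1 + t = n - 1) by omega, show ¬ (n - 1 + t = 2*n-2) by omega,
              show ¬ (t = 0) by omega]
      simp [colW, mw, h3, hx, show ¬ ((n:ℕ)-1 < n-1) by omega, show ¬ ((n:ℕ)-1 = 0) by omega]
    · simp [colW, mw, hMW, show ¬ (t < n-1) by omega, show ¬ (t = n-1) by omega,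
        show ¬ (t = 0) by omega, show ¬ (t + n - 1 = 0) by omega,
        show ¬ (t + n - 1 = n-1) by omega, show ¬ (t + n - 1 = 2*n-2) by omega]
  calc fA n f (mw n a (fA n f (mw n a g h)) k) = fA n f (colW n f 0 MW) := by rw [e0]
    _ = fA n f (colW n f (n-1) MW) := assoc' ha (by omega) (by omega) _
    _ = fA n f (mw n a g (fA n f (mw n a h k))) := by rw [e1]

theorem VWd_peel (ψ : ℕ → G → G) (x : ℕ → G) [Mul G] (hn : 2 ≤ n) {k : ℕ} (h1 : k ≤ n-2) :
    VWd n ψ x (n-1-k) = ψ (k+1) (x k) * VWd n ψ x (n-2-k) := by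
  rw [show n-1-k = (n-2-k)+1 by omega, VWd_succ, show n-1-(n-2-k) = k+1 by omega,
    Nat.add_sub_cancel]

theorem cancelV (hn : 2 ≤ n) (ha : PolyAssoc n f) (hu : PolyUnique n f) [Group G] (a : G)
    (hmulb : ∀ g h : G, g * h = fA n f (mw n a g h)) :
    ∀ k : ℕ, 1 ≤ k → k ≤ n-1 → ∀ y y' : ℕ → G, (∀ t, t < k → y t = y' t) →
      fA n f y = fA n f y' →
      VWd n (psif n f a) y (n-1-k) = VWd n (psif n f a) y' (n-1-k) := by
  intro k
  induction k with
  | zero => omega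
  | succ k ih =>
    intro _ hk2 y y' hpre h
    rcases Nat.eq_zero_or_pos k with rfl | hk
    · rw [star hn ha hu a hmulb y, star hn ha hu a hmulb y', hpre 0 (by omega)] at h
      rw [show n-1-1 = n-2 by omega]
      exact mul_left_cancel h
    · have hc := ih (by omega) (by omega) y y' (fun t ht => hpre t (by omega)) h
      rw [VWd_peel (psif n f a) y hn (by omega), VWd_peel (psif n f a) y' hn (by omega),
        hpre k (by omega)] at hc
      have h2 := mul_left_cancel hc
      rw [show n-1-(k+1) = n-2-k by omega]
      exact h2

theorem keyI0 (hn3 : 3 ≤ n) (ha : PolyAssoc n f) (hu : PolyUnique n f) [Group G] (a : G)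
    (hmulb : ∀ g h : G, g * h = fA n f (mw n a g h)) (z : ℕ → G) :
    fA n f z * psif n f a 2 (z n) = z 0 * psif n f a 2 (fA n f (shf 1 z)) := by
  have hn : 2 ≤ n := by omega
  have h := assoc' ha (show (0:ℕ) < 1 by omega) (show 1 < n by omega) z
  rw [star hn ha hu a hmulb (colW n f 0 z), star hn ha hu a hmulb (colW n f 1 z)] at h
  have c1 : colW n f 0 z 0 = fA n f z := by
    simp only [colW, if_neg (lt_irrefl 0), if_pos rfl]
    exact fA_congr (fun t ht => by simp [shf])
  have c2 : colW n f 1 z 0 = z 0 := by simp [colW]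
  have V0 : VWd n (psif n f a) (colW n f 0 z) (n-2) =
      psif n f a 2 (z n) * VWd n (psif n f a) (colW n f 0 z) (n-3) := by
    rw [show n-2 = n-1-1 by omega, VWd_peel (psif n f a) _ hn (by omega),
      show n-2-1 = n-3 by omega]
    congr 2 <;> simp [colW, show 1 + n - 1 = n by omega]
  have V1 : VWd n (psif n f a) (colW n f 1 z) (n-2) =
      psif n f a 2 (fA n f (shf 1 z)) * VWd n (psif n f a) (colW n f 1 z) (n-3) := by
    rw [show n-2 = n-1-1 by omega, VWd_peel (psif n f a) _ hn (by omega),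
      show n-2-1 = n-3 by omega]
    congr 2 <;> simp [colW]
  have T : VWd n (psif n f a) (colW n f 0 z) (n-3) =
      VWd n (psif n f a) (colW n f 1 z) (n-3) := by
    apply VWd_ext
    intro t ht1 ht2
    simp [colW, show ¬ (t < 0) by omega, show ¬ (t = 0) by omega,
      show ¬ (t < 1) by omega, show ¬ (t = 1) by omega]
  rw [c1, c2, V0, V1, T, ← mul_assoc, ← mul_assoc] at h
  exact mul_right_cancel h

theorem keyIk (hn : 2 ≤ n) (ha : PolyAssoc n f) (hu : PolyUnique n f) [Group G] (a : G)
    (hmulb : ∀ g h : G, g * h = fA n f (mw n a g h)) {k : ℕ} (h1 : 1 ≤ k) (h2 : k ≤ n-3)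
    (z : ℕ → G) :
    psif n f a (k+1) (fA n f (shf k z)) * psif n f a (k+2) (z (k+n)) =
    psif n f a (k+1) (z k) * psif n f a (k+2) (fA n f (shf (k+1) z)) := by
  have h := assoc' ha (show k < k+1 by omega) (show k+1 < n by omega) z
  have hc := cancelV hn ha hu a hmulb k h1 (by omega) (colW n f k z) (colW n f (k+1) z)
    (fun t ht => by simp [colW, ht, show t < k + 1 by omega]) h
  rw [VWd_peel (psif n f a) _ hn (by omega), VWd_peel (psif n f a) _ hn (by omega),
    show n-2-k = n-1-(k+1) by omega,
    VWd_peel (psif n f a) _ hn (by omega), VWd_peel (psif n f a) _ hn (by omega)] at hc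
  have T : VWd n (psif n f a) (colW n f k z) (n-2-(k+1)) =
      VWd n (psif n f a) (colW n f (k+1) z) (n-2-(k+1)) := by
    apply VWd_ext
    intro t ht1 ht2
    simp [colW, show ¬ (t < k) by omega, show ¬ (t = k) by omega,
      show ¬ (t < k+1) by omega, show ¬ (t = k+1) by omega]
  have ck0 : colW n f k z k = fA n f (shf k z) := by simp [colW]
  have ck1 : colW n f k z (k+1) = z (k+n) := by
    simp [colW, show ¬ (k+1 < k) by omega, show ¬ (k+1 = k) by omega,
      show k+1+n-1 = k+n by omega]
  have dk0 : colW n f (k+1) z k = z k := by simp [colW]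
  have dk1 : colW n f (k+1) z (k+1) = fA n f (shf (k+1) z) := by
    simp [colW]
  rw [ck0, ck1, dk0, dk1, T, ← mul_assoc, ← mul_assoc] at hc
  exact mul_right_cancel hc

theorem keyIm1 (hn3 : 3 ≤ n) (ha : PolyAssoc n f) (hu : PolyUnique n f) [Group G] (a : G)
    (hmulb : ∀ g h : G, g * h = fA n f (mw n a g h)) (z : ℕ → G) :
    psif n f a (n-1) (fA n f (shf (n-2) z)) * z (2*n-2) =
    psif n f a (n-1) (z (n-2)) * fA n f (shf (n-1) z) := by
  have hn : 2 ≤ n := by omega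
  have h := assoc' ha (show n-2 < n-1 by omega) (show n-1 < n by omega) z
  have hc := cancelV hn ha hu a hmulb (n-2) (by omega) (by omega)
    (colW n f (n-2) z) (colW n f (n-1) z)
    (fun t ht => by simp [colW, ht, show t < n - 1 by omega]) h
  rw [show n-1-(n-2) = 0+1 by omega, VWd_succ, VWd_succ, VWd_zero, VWd_zero,
    show n-1-0 = n-1 by omega, show n-1-1 = n-2 by omega] at hc
  have ck0 : colW n f (n-2) z (n-2) = fA n f (shf (n-2) z) := by
    simp [colW]
  have ck1 : colW n f (n-2) z (n-1) = z (2*n-2) := by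
    simp [colW, show ¬ (n-1 < n-2) by omega, show ¬ ((n:ℕ)-1 = n-2) by omega,
      show n-1+n-1 = 2*n-2 by omega]
  have dk0 : colW n f (n-1) z (n-2) = z (n-2) := by
    simp [colW, show n-2 < n-1 by omega]
  have dk1 : colW n f (n-1) z (n-1) = fA n f (shf (n-1) z) := by
    simp [colW]
  rw [ck0, ck1, dk0, dk1] at hc
  exact hc

end Dev2
end PostCoverAux

namespace PostCoverAux

variable {G : Type u}

/-- the word `(c, ε₂, …, ε_{n-1}, w)` -/
def nuW (n : ℕ) (c : G) (ε : ℕ → G) (w : G) : ℕ → G := fun t =>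
  if t = 0 then c else if t < n - 1 then ε (t+1) else w

def thetaF (n : ℕ) (f : (Fin n → G) → G) [Group G] (a : G) : G → G :=
  fun u => psif n f a 2 u * (psif n f a 2 1)⁻¹

section Dev3

variable {n : ℕ} {f : (Fin n → G) → G}

theorem lemN1 (hn : 2 ≤ n) (ha : PolyAssoc n f) (hu : PolyUnique n f) [Group G] (a : G)
    (hmulb : ∀ g h : G, g * h = fA n f (mw n a g h))
    (ε : ℕ → G) (hε : ∀ j, 2 ≤ j → j ≤ n-1 → psif n f a j (ε j) = 1) (c w : G) :
    fA n f (nuW n c ε w) = c * w := by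
  rw [star hn ha hu a hmulb (nuW n c ε w)]
  have h0 : nuW n c ε w 0 = c := by simp [nuW]
  have hV : ∀ j, j ≤ n-2 → VWd n (psif n f a) (nuW n c ε w) j = w := by
    intro j
    induction j with
    | zero =>
      intro _
      simp [VWd_zero, nuW, show ¬ ((n:ℕ)-1 = 0) by omega]
    | succ j ih =>
      intro hj
      rw [VWd_succ]
      have he : nuW n c ε w (n-1-j-1) = ε (n-1-j) := by
        simp [nuW, show ¬ (n-1-j-1 = 0) by omega, show n-1-j-1 < n-1 by omega]
        congr 1; omega
      rw [he, hε (n-1-j) (by omega) (by omega), one_mul, ih (by omega)]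
  rw [h0, hV (n-2) (le_refl _)]

theorem lemN2 (hn3 : 3 ≤ n) (ha : PolyAssoc n f) (hu : PolyUnique n f) [Group G] (a : G)
    (hmulb : ∀ g h : G, g * h = fA n f (mw n a g h))
    (ε : ℕ → G) (hε : ∀ j, 2 ≤ j → j ≤ n-1 → psif n f a j (ε j) = 1) :
    fA n f (fun t => if t ≤ 1 then 1 else ε t) = 1 := by
  have hn : 2 ≤ n := by omega
  set z : ℕ → G := fun t => if t ≤ 1 then 1 else if t ≤ n-1 then ε t else a with hz
  have h := keyI0 hn3 ha hu a hmulb z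
  have h1 : fA n f (shf 1 z) = a := by
    have : shf 1 z = nuW n 1 ε a := by
      funext t
      simp only [shf, nuW, hz]
      rcases Nat.eq_zero_or_pos t with rfl | ht
      · simp
      · rcases Nat.lt_trichotomy t (n-1) with h4 | h4 | h4
        · simp [show ¬ (1 + t ≤ 1) by omega, show 1 + t ≤ n-1 by omega,
            show t + 1 ≤ n-1 by omega,
            show ¬ (t = 0) by omega, h4, show 1 + t = t + 1 by omega]
        · simp [show ¬ (1 + t ≤ 1) by omega, show ¬ (1 + t ≤ n-1) by omega,
            show ¬ (t = 0) by omega, show ¬ (t < n-1) by omega]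
        · simp [show ¬ (1 + t ≤ 1) by omega, show ¬ (1 + t ≤ n-1) by omega,
            show ¬ (t = 0) by omega, show ¬ (t < n-1) by omega]
    rw [this, lemN1 hn ha hu a hmulb ε hε, one_mul]
  have h2 : z n = a := by simp [hz, show ¬ (n ≤ 1) by omega, show ¬ (n ≤ n-1) by omega]
  have h3 : z 0 = 1 := by simp [hz]
  rw [h1, h2, h3] at h
  have h4 : fA n f z = 1 := mul_right_cancel h
  have h6 : fA n f (fun t => if t ≤ 1 then (1:G) else ε t) = fA n f z := by
    apply fA_congr
    intro t ht
    simp only [hz]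
    by_cases h5 : t ≤ 1
    · simp [h5]
    · simp [h5, show t ≤ n-1 by omega]
  rw [h6]
  exact h4

theorem lemKeyA (hn3 : 3 ≤ n) (ha : PolyAssoc n f) (hu : PolyUnique n f) [Group G] (a : G)
    (hmulb : ∀ g h : G, g * h = fA n f (mw n a g h))
    (ε : ℕ → G) (hε : ∀ j, 2 ≤ j → j ≤ n-1 → psif n f a j (ε j) = 1) (u : G) :
    fA n f (fun t => if t = 0 then 1 else if t = 1 then u else ε t) = thetaF n f a u := by
  have hn : 2 ≤ n := by omega
  set ka : ℕ → G := fun t => if t = 0 then 1 else if t = 1 then u else ε t with hka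
  set ne2 : ℕ → G := fun t => if t ≤ 1 then 1 else ε t with hne
  have hVne : psif n f a 2 1 * VWd n (psif n f a) ne2 (n-3) = 1 := by
    have h := lemN2 hn3 ha hu a hmulb ε hε
    rw [star hn ha hu a hmulb ne2] at h
    have e0 : ne2 0 = 1 := by simp [hne]
    have e1 : ne2 1 = 1 := by simp [hne]
    rw [e0, one_mul, show n-2 = n-1-1 by omega, VWd_peel (psif n f a) _ hn (by omega),
      e1, show n-2-1 = n-3 by omega] at h
    exact h
  have hVka : VWd n (psif n f a) ka (n-3) = VWd n (psif n f a) ne2 (n-3) := by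
    apply VWd_ext
    intro t ht1 ht2
    simp [hka, hne, show ¬ (t = 0) by omega, show ¬ (t = 1) by omega,
      show ¬ (t ≤ 1) by omega]
  rw [star hn ha hu a hmulb ka, show ka 0 = 1 from by simp [hka], one_mul,
    show n-2 = n-1-1 by omega, VWd_peel (psif n f a) _ hn (by omega),
    show ka 1 = u from by simp [hka], show n-2-1 = n-3 by omega, hVka, thetaF]
  congr 1
  exact (inv_eq_of_mul_eq_one_right hVne).symm

theorem lemKeyB (hn3 : 3 ≤ n) (ha : PolyAssoc n f) (hu : PolyUnique n f) [Group G] (a : G)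
    (hmulb : ∀ g h : G, g * h = fA n f (mw n a g h))
    (ε : ℕ → G) (hε : ∀ j, 2 ≤ j → j ≤ n-1 → psif n f a j (ε j) = 1) (u w : G) :
    psif n f a 2 (u * w) = thetaF n f a u * psif n f a 2 w := by
  have hn : 2 ≤ n := by omega
  set z : ℕ → G := fun t => if t = 0 then 1 else if t = 1 then u else
    if t ≤ n-1 then ε t else w with hz
  have h := keyI0 hn3 ha hu a hmulb z
  have h1 : fA n f z = thetaF n f a u := by
    rw [← lemKeyA hn3 ha hu a hmulb ε hε u]
    apply fA_congr
    intro t ht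
    simp only [hz]
    by_cases h0 : t = 0
    · simp [h0]
    · by_cases h1 : t = 1
      · simp [h0, h1]
      · simp [h0, h1, show t ≤ n-1 by omega]
  have h2 : z n = w := by
    simp [hz, show ¬ (n = 0) by omega, show ¬ (n = 1) by omega, show ¬ (n ≤ n-1) by omega]
  have h3 : fA n f (shf 1 z) = u * w := by
    rw [← lemN1 hn ha hu a hmulb ε hε u w]
    apply fA_congr
    intro t ht
    simp only [shf, nuW, hz]
    rcases Nat.eq_zero_or_pos t with rfl | ht0
    · simp
    · rcases Nat.lt_trichotomy t (n-1) with h4 | h4 | h4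
      · simp [show ¬ (1 + t = 0) by omega, show ¬ (1 + t = 1) by omega,
          show 1 + t ≤ n-1 by omega, show t + 1 ≤ n-1 by omega,
          show ¬ (t = 0) by omega, h4,
          show 1 + t = t + 1 by omega]
      · simp [show ¬ (1 + t = 0) by omega, show ¬ (1 + t = 1) by omega,
          show ¬ (1 + t ≤ n-1) by omega, show ¬ (t = 0) by omega,
          show ¬ (t < n-1) by omega]
      · omega
  rw [h1, h2, h3, show z 0 = 1 from by simp [hz], one_mul] at h
  exact h.symm

theorem lemJk (hn3 : 3 ≤ n) (ha : PolyAssoc n f) (hu : PolyUnique n f) [Group G] (a : G)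
    (hmulb : ∀ g h : G, g * h = fA n f (mw n a g h))
    (ε : ℕ → G) (hε : ∀ j, 2 ≤ j → j ≤ n-1 → psif n f a j (ε j) = 1)
    {k : ℕ} (h1 : 1 ≤ k) (h2 : k ≤ n-3) (u w : G) :
    psif n f a (k+1) (thetaF n f a u) * psif n f a (k+2) w =
    psif n f a (k+1) 1 * psif n f a (k+2) (u * w) := by
  have hn : 2 ≤ n := by omega
  set z : ℕ → G := fun t => if t < k then a else if t = k then 1 else if t = k+1 then u
    else if t ≤ k+n-1 then ε (t-k) else if t = k+n then w else a with hz
  have e1 : fA n f (shf k z) = thetaF n f a u := by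
    rw [← lemKeyA hn3 ha hu a hmulb ε hε u]
    apply fA_congr
    intro t ht
    simp only [shf, hz]
    rcases Nat.eq_zero_or_pos t with rfl | ht0
    · simp
    · by_cases h4 : t = 1
      · simp [h4, show ¬ (k + 1 < k) by omega, show ¬ (k + 1 = k) by omega]
      · simp [show ¬ (k + t < k) by omega, show ¬ (k + t = k) by omega,
          show ¬ (k + t = k + 1) by omega, show k + t ≤ k + n - 1 by omega,
          show ¬ (t = 0) by omega, h4, show k + t - k = t by omega]
  have e2 : z (k+n) = w := by
    simp [hz, show ¬ (k + n < k) by omega, show ¬ (k + n = k) by omega,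
      show ¬ (k + n = k + 1) by omega, show ¬ (k + n ≤ k+n-1) by omega,
      show ¬ (n = 0) by omega, show ¬ (n = 1) by omega]
  have e3 : z k = 1 := by simp [hz]
  have e4 : fA n f (shf (k+1) z) = u * w := by
    rw [← lemN1 hn ha hu a hmulb ε hε u w]
    apply fA_congr
    intro t ht
    simp only [shf, nuW, hz]
    rcases Nat.eq_zero_or_pos t with rfl | ht0
    · simp [show ¬ (k + 1 + 0 < k) by omega, show ¬ (k + 1 + 0 = k) by omega,
        show k + 1 + 0 = k + 1 by omega]
    · rcases Nat.lt_trichotomy t (n-1) with h4 | h4 | h4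
      · simp [show ¬ (k + 1 + t < k) by omega, show ¬ (k + 1 + t = k) by omega,
          show ¬ (k + 1 + t = k + 1) by omega, show k + 1 + t ≤ k + n - 1 by omega,
          show ¬ (t = 0) by omega, h4, show k + 1 + t - k = t + 1 by omega]
      · simp [show ¬ (k + 1 + t < k) by omega, show ¬ (k + 1 + t = k) by omega,
          show ¬ (k + 1 + t = k + 1) by omega, show ¬ (k + 1 + t ≤ k + n - 1) by omega,
          show k + 1 + t = k + n by omega, show ¬ (t = 0) by omega,
          show ¬ (n = 0) by omega, show ¬ (n = 1) by omega,
          show ¬ (k + n ≤ k + n - 1) by omega,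
          show ¬ (t < n-1) by omega]
      · omega
  have h := keyIk hn ha hu a hmulb h1 h2 z
  rw [e1, e2, e3, e4] at h
  exact h

theorem lemJm1 (hn3 : 3 ≤ n) (ha : PolyAssoc n f) (hu : PolyUnique n f) [Group G] (a : G)
    (hmulb : ∀ g h : G, g * h = fA n f (mw n a g h))
    (ε : ℕ → G) (hε : ∀ j, 2 ≤ j → j ≤ n-1 → psif n f a j (ε j) = 1) (u w : G) :
    psif n f a (n-1) (thetaF n f a u) * w = psif n f a (n-1) 1 * (u * w) := by
  have hn : 2 ≤ n := by omega
  set z : ℕ → G := fun t => if t < n-2 then a else if t = n-2 then 1 else if t = n-1 then u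
    else if t ≤ 2*n-3 then ε (t-(n-2)) else if t = 2*n-2 then w else a with hz
  have e1 : fA n f (shf (n-2) z) = thetaF n f a u := by
    rw [← lemKeyA hn3 ha hu a hmulb ε hε u]
    apply fA_congr
    intro t ht
    simp only [shf, hz]
    rcases Nat.eq_zero_or_pos t with rfl | ht0
    · simp
    · by_cases h4 : t = 1
      · simp [h4, show ¬ (n - 2 + 1 < n - 2) by omega, show ¬ (n - 2 + 1 = n - 2) by omega,
          show ¬ (n - 1 < n - 2) by omega, show ¬ ((n:ℕ) - 1 = n - 2) by omega,
          show n - 2 + 1 = n - 1 by omega]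
      · simp [show ¬ (n - 2 + t < n - 2) by omega, show ¬ (n - 2 + t = n - 2) by omega,
          show ¬ (n - 2 + t = n - 1) by omega, show n - 2 + t ≤ 2*n-3 by omega,
          show ¬ (t = 0) by omega, h4, show n - 2 + t - (n - 2) = t by omega]
  have e2 : z (2*n-2) = w := by
    simp [hz, show ¬ (2*n-2 < n-2) by omega, show ¬ (2*n-2 = n-2) by omega,
      show ¬ (2*n-2 = n-1) by omega, show ¬ (2*n-2 ≤ 2*n-3) by omega]
  have e3 : z (n-2) = 1 := by simp [hz]
  have e4 : fA n f (shf (n-1) z) = u * w := by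
    rw [← lemN1 hn ha hu a hmulb ε hε u w]
    apply fA_congr
    intro t ht
    simp only [shf, nuW, hz]
    rcases Nat.eq_zero_or_pos t with rfl | ht0
    · simp [show ¬ (n - 1 + 0 < n - 2) by omega, show ¬ (n - 1 + 0 = n - 2) by omega,
        show ¬ (n - 1 < n - 2) by omega, show ¬ ((n:ℕ) - 1 = n - 2) by omega,
        show n - 1 + 0 = n - 1 by omega]
    · rcases Nat.lt_trichotomy t (n-1) with h4 | h4 | h4
      · simp [show ¬ (n - 1 + t < n - 2) by omega, show ¬ (n - 1 + t = n - 2) by omega,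
          show ¬ (n - 1 + t = n - 1) by omega, show n - 1 + t ≤ 2*n-3 by omega,
          show ¬ (t = 0) by omega, h4, show n - 1 + t - (n - 2) = t + 1 by omega]
      · simp [show ¬ (n - 1 + t < n - 2) by omega, show ¬ (n - 1 + t = n - 2) by omega,
          show ¬ (n - 1 + t = n - 1) by omega, show ¬ (n - 1 + t ≤ 2*n-3) by omega,
          show n - 1 + t = 2*n-2 by omega, show ¬ (t = 0) by omega,
          show ¬ (2*n-2 < n-2) by omega, show ¬ (2*n-2 = n-2) by omega,
          show ¬ (2*n-2 = n-1) by omega, show ¬ (2*n ≤ 2*n-3+2) by omega,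
          show ¬ (2*n-2 ≤ 2*n-3) by omega,
          show ¬ (t < n-1) by omega]
      · omega
  have h := keyIm1 hn3 ha hu a hmulb z
  rw [e1, e2, e3, e4] at h
  exact h

end Dev3
end PostCoverAux

namespace PostCoverAux

variable {G : Type u}

def flatP (mul : G → G → G) (one : G) (θ : G → G) (x : ℕ → G) : ℕ → G := fun k =>
  Nat.rec one (fun k ih => mul ih (θ^[k] (x k))) k

theorem flatP_zero (mul : G → G → G) (one : G) (θ : G → G) (x : ℕ → G) :
    flatP mul one θ x 0 = one := rfl

theorem flatP_succ (mul : G → G → G) (one : G) (θ : G → G) (x : ℕ → G) (k : ℕ) :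
    flatP mul one θ x (k+1) = mul (flatP mul one θ x k) (θ^[k] (x k)) := rfl

def EEc [Mul G] [One G] (d : ℕ → G) : ℕ → G := fun j =>
  Nat.rec 1 (fun i ih => ih * d (i+2)) j

theorem EEc_zero [Mul G] [One G] (d : ℕ → G) : EEc d 0 = 1 := rfl

theorem EEc_succ [Mul G] [One G] (d : ℕ → G) (i : ℕ) :
    EEc d (i+1) = EEc d i * d (i+2) := rfl

section Dev4

variable {n : ℕ} {f : (Fin n → G) → G}

theorem theta_one [Group G] (a : G) : thetaF n f a 1 = 1 := mul_inv_cancel _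

theorem theta_iter_one [Group G] (a : G) : ∀ j, (thetaF n f a)^[j] (1:G) = 1 := by
  intro j
  induction j with
  | zero => rfl
  | succ j ih => rw [Function.iterate_succ_apply, theta_one, ih]

theorem theta_mul (hn3 : 3 ≤ n) (ha : PolyAssoc n f) (hu : PolyUnique n f) [Group G] (a : G)
    (hmulb : ∀ g h : G, g * h = fA n f (mw n a g h))
    (ε : ℕ → G) (hε : ∀ j, 2 ≤ j → j ≤ n-1 → psif n f a j (ε j) = 1) (u v : G) :
    thetaF n f a (u * v) = thetaF n f a u * thetaF n f a v := by
  have h := lemKeyB hn3 ha hu a hmulb ε hε u v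
  show psif n f a 2 (u*v) * (psif n f a 2 1)⁻¹ = _
  rw [h, mul_assoc]
  rfl

theorem psif_bij (hn : 2 ≤ n) (hu : PolyUnique n f) [Group G] (a : G) {j : ℕ}
    (h1 : 1 ≤ j) (h2 : j ≤ n-1) : Function.Bijective (psif n f a j) := by
  have hb := hkf_bij hn hu a h1 h2
  have he : psif n f a j = (fun w => a⁻¹ * w) ∘ (hkf n f a j) := rfl
  rw [he]
  exact (Equiv.mulLeft (a⁻¹ : G)).bijective.comp hb

theorem theta_bij (hn3 : 3 ≤ n) (hu : PolyUnique n f) [Group G] (a : G) :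
    Function.Bijective (thetaF n f a) := by
  have he : thetaF n f a = (fun w => w * (psif n f a 2 1)⁻¹) ∘ psif n f a 2 := rfl
  rw [he]
  exact (Equiv.mulRight ((psif n f a 2 1)⁻¹ : G)).bijective.comp
    (psif_bij (by omega) hu a (by omega) (by omega))

theorem lemP (hn3 : 3 ≤ n) (ha : PolyAssoc n f) (hu : PolyUnique n f) [Group G] (a : G)
    (hmulb : ∀ g h : G, g * h = fA n f (mw n a g h))
    (ε : ℕ → G) (hε : ∀ j, 2 ≤ j → j ≤ n-1 → psif n f a j (ε j) = 1) :
    ∀ i, i ≤ n-3 → ∀ u : G,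
      EEc (fun j => psif n f a j 1) i * psif n f a (i+2) u
        = (thetaF n f a)^[i+1] u * EEc (fun j => psif n f a j 1) (i+1) := by
  intro i
  induction i with
  | zero =>
    intro _ u
    rw [EEc_zero, one_mul, EEc_succ, EEc_zero, one_mul, Function.iterate_one]
    show psif n f a 2 u = (psif n f a 2 u * (psif n f a 2 1)⁻¹) * psif n f a 2 1
    rw [inv_mul_cancel_right]
  | succ i ih =>
    intro hi u
    rw [EEc_succ]
    have hrec := lemJk hn3 ha hu a hmulb ε hε (k := i+1) (by omega) (by omega) u 1
    rw [mul_one] at hrec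
    calc (EEc (fun j => psif n f a j 1) i * psif n f a (i+2) 1) * psif n f a (i+3) u
        = EEc (fun j => psif n f a j 1) i * (psif n f a (i+2) 1 * psif n f a (i+3) u) :=
          mul_assoc _ _ _
      _ = EEc (fun j => psif n f a j 1) i *
            (psif n f a (i+2) (thetaF n f a u) * psif n f a (i+3) 1) := by rw [← hrec]
      _ = (EEc (fun j => psif n f a j 1) i * psif n f a (i+2) (thetaF n f a u)) *
            psif n f a (i+3) 1 := (mul_assoc _ _ _).symm
      _ = ((thetaF n f a)^[i+1] (thetaF n f a u) * EEc (fun j => psif n f a j 1) (i+1)) *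
            psif n f a (i+3) 1 := by rw [ih (by omega) (thetaF n f a u)]
      _ = (thetaF n f a)^[i+2] u *
            (EEc (fun j => psif n f a j 1) (i+1) * psif n f a (i+3) 1) := by
          rw [← Function.iterate_succ_apply, mul_assoc]
      _ = (thetaF n f a)^[i+2] u * EEc (fun j => psif n f a j 1) (i+2) := by
          rw [← EEc_succ]

theorem lemU (hn3 : 3 ≤ n) (ha : PolyAssoc n f) (hu : PolyUnique n f) [Group G] (a : G)
    (hmulb : ∀ g h : G, g * h = fA n f (mw n a g h))
    (ε : ℕ → G) (hε : ∀ j, 2 ≤ j → j ≤ n-1 → psif n f a j (ε j) = 1) :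
    ∀ i, i ≤ n-2 → ∀ x : ℕ → G,
      fA n f x = flatP (· * ·) 1 (thetaF n f a) x (i+1) *
        EEc (fun j => psif n f a j 1) i * VWd n (psif n f a) x (n-2-i) := by
  have hn : 2 ≤ n := by omega
  intro i
  induction i with
  | zero =>
    intro _ x
    rw [star hn ha hu a hmulb x, flatP_succ, flatP_zero, EEc_zero, Function.iterate_zero]
    simp
  | succ i ih =>
    intro hi x
    rw [ih (by omega) x]
    have hpeel : VWd n (psif n f a) x (n-2-i) =
        psif n f a (i+2) (x (i+1)) * VWd n (psif n f a) x (n-2-(i+1)) := by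
      rw [show n-2-i = n-1-(i+1) by omega, VWd_peel (psif n f a) x hn (by omega),
        show n-2-(i+1) = n-2-(i+1) from rfl]
    rw [hpeel]
    have hP := lemP hn3 ha hu a hmulb ε hε i (by omega) (x (i+1))
    rw [flatP_succ _ _ _ _ (i+1)]
    have hstep : flatP (· * ·) 1 (thetaF n f a) x (i+1) * EEc (fun j => psif n f a j 1) i *
        (psif n f a (i+2) (x (i+1)) * VWd n (psif n f a) x (n-2-(i+1)))
      = flatP (· * ·) 1 (thetaF n f a) x (i+1) *
        (EEc (fun j => psif n f a j 1) i * psif n f a (i+2) (x (i+1))) *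
        VWd n (psif n f a) x (n-2-(i+1)) := by group
    rw [hstep, hP]
    group

theorem lemHG (hn3 : 3 ≤ n) (ha : PolyAssoc n f) (hu : PolyUnique n f) [Group G] (a : G)
    (hmulb : ∀ g h : G, g * h = fA n f (mw n a g h))
    (ε : ℕ → G) (hε : ∀ j, 2 ≤ j → j ≤ n-1 → psif n f a j (ε j) = 1) (x : ℕ → G) :
    fA n f x = flatP (· * ·) 1 (thetaF n f a) x (n-1) *
      (EEc (fun j => psif n f a j 1) (n-2) * x (n-1)) := by
  have h := lemU hn3 ha hu a hmulb ε hε (n-2) (le_refl _) x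
  rw [show n-2+1 = n-1 by omega, Nat.sub_self, VWd_zero, mul_assoc] at h
  exact h

theorem flat_ones [Group G] (a : G) (θ : G → G) (hθ : ∀ j, θ^[j] (1:G) = 1) :
    ∀ j (x : ℕ → G), (∀ t, t < j → x t = 1) → flatP (· * ·) 1 θ x j = 1 := by
  intro j
  induction j with
  | zero => intro x _; rfl
  | succ j ih =>
    intro x hx
    rw [flatP_succ, ih x (fun t ht => hx t (by omega)), hx j (by omega), hθ j, one_mul]

theorem lemConj (hn3 : 3 ≤ n) (ha : PolyAssoc n f) (hu : PolyUnique n f) [Group G] (a : G)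
    (hmulb : ∀ g h : G, g * h = fA n f (mw n a g h))
    (ε : ℕ → G) (hε : ∀ j, 2 ≤ j → j ≤ n-1 → psif n f a j (ε j) = 1) :
    thetaF n f a (EEc (fun j => psif n f a j 1) (n-2)) = EEc (fun j => psif n f a j 1) (n-2) ∧
    ∀ u, (thetaF n f a)^[n-1] u =
      EEc (fun j => psif n f a j 1) (n-2) * u * (EEc (fun j => psif n f a j 1) (n-2))⁻¹ := by
  have hn : 2 ≤ n := by omega
  set θ := thetaF n f a with hθdef
  set b := EEc (fun j => psif n f a j 1) (n-2) with hbdef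
  have key : ∀ u, b * u = θ^[n-1] u * θ b := by
    intro u
    set z : ℕ → G := fun t => if t = n-1 then u else if t ≤ n then 1 else a with hz
    have h := keyI0 hn3 ha hu a hmulb z
    have h1 : fA n f z = b * u := by
      rw [lemHG hn3 ha hu a hmulb ε hε z,
        flat_ones a θ (theta_iter_one a) (n-1) z
          (fun t ht => by simp [hz, show ¬ (t = n-1) by omega, show t ≤ n by omega]),
        show z (n-1) = u from by simp [hz], one_mul]
    have h2 : z n = 1 := by simp [hz, show ¬ (n = n-1) by omega]
    have h3 : fA n f (shf 1 z) = θ^[n-2] u * b := by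
      rw [lemHG hn3 ha hu a hmulb ε hε (shf 1 z)]
      have e1 : flatP (· * ·) 1 θ (shf 1 z) (n-1) = θ^[n-2] u := by
        rw [show n-1 = (n-2)+1 by omega, flatP_succ,
          flat_ones a θ (theta_iter_one a) (n-2) _
            (fun t ht => by simp [shf, hz, show ¬ (1+t = n-1) by omega, show 1+t ≤ n by omega]),
          one_mul]
        congr 1
        simp [shf, hz, show 1+(n-2) = n-1 by omega]
      have e2 : shf 1 z (n-1) = 1 := by
        simp [shf, hz, show ¬ (1+(n-1) = n-1) by omega, show 1+(n-1) ≤ n by omega]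
      rw [e1, e2, mul_one]
    have h4 : z 0 = 1 := by simp [hz, show ¬ ((0:ℕ) = n-1) by omega]
    rw [h1, h2, h3, h4, one_mul] at h
    have hψ : ∀ v, psif n f a 2 v = θ v * psif n f a 2 1 := by
      intro v
      show _ = (psif n f a 2 v * (psif n f a 2 1)⁻¹) * _
      rw [inv_mul_cancel_right]
    rw [hψ (θ^[n-2] u * b)] at h
    have h5 := mul_right_cancel h
    rw [h5, hθdef, theta_mul hn3 ha hu a hmulb ε hε, ← hθdef,
      show n-1 = (n-2)+1 by omega, Function.iterate_succ_apply']
  have hb : θ b = b := by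
    have h6 := key 1
    rw [mul_one, theta_iter_one a (n-1), one_mul] at h6
    exact h6.symm
  refine ⟨hb, fun u => ?_⟩
  have h7 := key u
  rw [hb] at h7
  rw [eq_mul_inv_iff_mul_eq]
  exact h7.symm

end Dev4
end PostCoverAux

namespace PostCoverAux

variable {G : Type u}

theorem hg_exists {n : ℕ} {f : (Fin n → G) → G} [Nonempty G] (hn : 2 ≤ n)
    (ha : PolyAssoc n f) (hu : PolyUnique n f) :
    ∃ (mul : G → G → G) (one : G) (inv : G → G) (θ : G → G) (b : G),
      (∀ x y z : G, mul (mul x y) z = mul x (mul y z)) ∧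
      (∀ x, mul one x = x) ∧ (∀ x, mul (inv x) x = one) ∧
      Function.Bijective θ ∧ (∀ u v, θ (mul u v) = mul (θ u) (θ v)) ∧ θ b = b ∧
      (∀ u, θ^[n-1] u = mul (mul b u) (inv b)) ∧
      (∀ x : ℕ → G, fA n f x = mul (flatP mul one θ x (n-1)) (mul b (x (n-1)))) := by
  obtain ⟨a⟩ := (inferInstance : Nonempty G)
  have massoc := mul_assoc_raw hn ha a
  obtain ⟨e, he⟩ := mul_solv hn hu a a a
  have hone : ∀ c : G, fA n f (mw n a e c) = c := by
    intro c
    obtain ⟨y, hy⟩ := mul_solv' hn hu a a c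
    calc fA n f (mw n a e c) = fA n f (mw n a e (fA n f (mw n a a y))) := by rw [hy]
      _ = fA n f (mw n a (fA n f (mw n a e a)) y) := (massoc e a y).symm
      _ = fA n f (mw n a a y) := by rw [he]
      _ = c := hy
  have hinvex : ∀ g : G, ∃ x : G, fA n f (mw n a x g) = e := fun g => mul_solv hn hu a g e
  choose invf hinv using hinvex
  letI : Mul G := ⟨fun g h => fA n f (mw n a g h)⟩
  letI : One G := ⟨e⟩
  letI : Inv G := ⟨invf⟩
  letI grp : Group G := Group.ofLeftAxioms massoc hone hinv
  have hmulb : ∀ g h : G, g * h = fA n f (mw n a g h) := fun _ _ => rfl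
  rcases Nat.lt_or_ge n 3 with hn2 | hn3
  · -- n = 2
    have hn2' : n - 1 = 1 := by omega
    refine ⟨(· * ·), 1, invf, id, 1, mul_assoc, one_mul, fun x => inv_mul_cancel x,
      Function.bijective_id, fun _ _ => rfl, rfl, ?_, ?_⟩
    · intro u
      rw [hn2', Function.iterate_one]
      show u = (1 * u) * invf 1
      have h9 : invf 1 = (1:G)⁻¹ := rfl
      rw [one_mul, h9, inv_one, mul_one]
    · intro x
      have hs := star hn ha hu a hmulb x
      rw [show n - 2 = 0 by omega, VWd_zero, hn2'] at hs
      rw [hn2', hs]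
      show x 0 * x 1 = ((1:G) * ((id : G → G)^[0] (x 0))) * (1 * x 1)
      simp
  · -- n ≥ 3
    have hεex : ∀ j : ℕ, ∃ x : G, 2 ≤ j → j ≤ n-1 → psif n f a j x = 1 := by
      intro j
      by_cases hj : 2 ≤ j ∧ j ≤ n-1
      · obtain ⟨x, hx⟩ := (psif_bij hn hu a (j := j) (by omega) hj.2).2 1
        exact ⟨x, fun _ _ => hx⟩
      · exact ⟨1, fun h1 h2 => absurd ⟨h1, h2⟩ hj⟩
    choose ε hε using hεex
    obtain ⟨hθb, hconj⟩ := lemConj hn3 ha hu a hmulb ε hε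
    refine ⟨(· * ·), 1, invf, thetaF n f a, EEc (fun j => psif n f a j 1) (n-2),
      mul_assoc, one_mul, fun x => inv_mul_cancel x, theta_bij hn3 hu a,
      theta_mul hn3 ha hu a hmulb ε hε, hθb, ?_, ?_⟩
    · intro u
      exact hconj u
    · intro x
      have h := lemHG hn3 ha hu a hmulb ε hε x
      rw [h]

end PostCoverAux

open PostCoverAux

/-- Post cover theorem, existence: for every `n`-ary group `(G, f)` with
`n ≥ 2` there exist a group `H`, an injective map `ι : G → H`, and a normal subgroup
`K ≤ H` such that (1) `ι '' G` is a left coset of `K`; (2) `H ⧸ K` is cyclic of order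
`n - 1`; (3) `ι (f (x₁, …, xₙ)) = ι x₁ * ι x₂ * ⋯ * ι xₙ` for all `x₁, …, xₙ ∈ G`;
(4) `ι '' G` generates `H`. -/
theorem post_cover_exists {G : Type u} [Nonempty G] (n : ℕ) (hn : 2 ≤ n)
    (f : (Fin n → G) → G) (hassoc : PolyAssoc n f) (hunique : PolyUnique n f) :
    ∃ (H : GrpCat.{u}) (ι : G → H) (K : Subgroup H) (_ : K.Normal),
      Function.Injective ι ∧
      (∃ g : H, Set.range ι = g • (K : Set H)) ∧
      IsCyclic (H ⧸ K) ∧ Nat.card (H ⧸ K) = n - 1 ∧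
      (∀ x : Fin n → G, ι (f x) = (List.ofFn fun i : Fin n => ι (x i)).prod) ∧
      Subgroup.closure (Set.range ι) = ⊤ := by

  classical
  obtain ⟨mul, one, inv, θ, b, hassoc', hone', hinv', hθbij, hθmul, hθb, hconj, hform⟩ :=
    PostCoverAux.hg_exists hn hassoc hunique
  letI : Mul G := ⟨mul⟩
  letI : One G := ⟨one⟩
  letI : Inv G := ⟨inv⟩
  letI grp : Group G := Group.ofLeftAxioms hassoc' hone' hinv'
  have hθmul' : ∀ u v : G, θ (u * v) = θ u * θ v := hθmul
  have hconj' : ∀ u : G, θ^[n-1] u = b * u * b⁻¹ := hconj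
  have hθ1 : θ (1 : G) = 1 := by
    have h7 := hθmul' 1 1
    rw [one_mul] at h7
    exact (left_eq_mul.mp h7)
  set Θ : MulAut G := MulEquiv.ofBijective (MonoidHom.mk' θ hθmul') hθbij with hΘdef
  have Θapp : ∀ u : G, Θ u = θ u := fun _ => rfl
  have Θpow : ∀ (j : ℕ) (u : G), (Θ ^ j) u = θ^[j] u := by
    intro j
    induction j with
    | zero => intro u; rfl
    | succ j ih =>
      intro u
      rw [pow_succ, MulAut.mul_apply, Θapp, ih (θ u), ← Function.iterate_succ_apply]
  set act : Multiplicative ℤ →* MulAut G := zpowersHom (MulAut G) Θ with hact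
  have actapp : ∀ k : ℤ, act (Multiplicative.ofAdd k) = Θ ^ k := fun k => rfl
  have hbst : Θ ∈ MulAction.stabilizer (MulAut G) b := by
    rw [MulAction.mem_stabilizer_iff]
    show Θ b = b
    exact hθb
  have Θfixb : ∀ k : ℤ, (Θ ^ k) b = b := by
    intro k
    have h2 := zpow_mem hbst k
    rw [MulAction.mem_stabilizer_iff] at h2
    exact h2
  have Θfixbinv : ∀ k : ℤ, (Θ ^ k) b⁻¹ = b⁻¹ := by
    intro k
    rw [map_inv, Θfixb]
  have Θfixbz : ∀ (k t : ℤ), (Θ ^ k) (b ^ t) = b ^ t := by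
    intro k t
    rw [map_zpow, Θfixb]
  have Θconj : ∀ g : G, (Θ ^ ((n-1 : ℕ) : ℤ)) g = b * g * b⁻¹ := by
    intro g
    rw [zpow_natCast, Θpow]
    exact hconj' g
  set ζ : G ⋊[act] Multiplicative ℤ := ⟨b⁻¹, Multiplicative.ofAdd ((n-1 : ℕ) : ℤ)⟩ with hζdef
  have hcen : ∀ h : G ⋊[act] Multiplicative ℤ, Commute h ζ := by
    rintro ⟨g, w⟩
    show (⟨g, w⟩ : G ⋊[act] Multiplicative ℤ) * ζ = ζ * ⟨g, w⟩
    rw [hζdef, SemidirectProduct.mul_def, SemidirectProduct.mul_def]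
    have e1 : act w b⁻¹ = b⁻¹ := by
      rw [show w = Multiplicative.ofAdd (Multiplicative.toAdd w) from rfl, actapp, Θfixbinv]
    have e2 : act (Multiplicative.ofAdd ((n-1 : ℕ) : ℤ)) g = b * g * b⁻¹ := by
      rw [actapp, Θconj]
    refine SemidirectProduct.ext ?_ ?_
    · show g * act w b⁻¹ = b⁻¹ * act (Multiplicative.ofAdd ((n-1 : ℕ) : ℤ)) g
      rw [e1, e2]
      group
    · exact mul_comm _ _
  set Z : Subgroup (G ⋊[act] Multiplicative ℤ) := Subgroup.zpowers ζ with hZdef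
  haveI hZn : Z.Normal := by
    constructor
    intro x hx g
    rw [hZdef, Subgroup.mem_zpowers_iff] at hx
    obtain ⟨t, rfl⟩ := hx
    have hcomm : Commute g (ζ ^ t) := (hcen g).zpow_right t
    rw [hcomm.eq, mul_inv_cancel_right]
    exact zpow_mem (Subgroup.mem_zpowers ζ) t
  set ρ₀ : (G ⋊[act] Multiplicative ℤ) →* Multiplicative (ZMod (n-1)) :=
    (AddMonoidHom.toMultiplicative (Int.castAddHom (ZMod (n-1)))).comp
      SemidirectProduct.rightHom with hρ₀def
  have hρ₀app : ∀ (g : G) (w : Multiplicative ℤ),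
      ρ₀ ⟨g, w⟩ = Multiplicative.ofAdd ((Multiplicative.toAdd w : ℤ) : ZMod (n-1)) :=
    fun _ _ => rfl
  have hζker : Z ≤ ρ₀.ker := by
    rw [hZdef, Subgroup.zpowers_le]
    rw [MonoidHom.mem_ker, hζdef, hρ₀app]
    have e3 : ((((n-1:ℕ):ℤ)) : ZMod (n-1)) = 0 := by
      push_cast
      exact ZMod.natCast_self _
    rw [show Multiplicative.toAdd (Multiplicative.ofAdd ((n-1:ℕ):ℤ)) = ((n-1:ℕ):ℤ) from rfl, e3]
    rfl
  set ρ : ((G ⋊[act] Multiplicative ℤ) ⧸ Z) →* Multiplicative (ZMod (n-1)) :=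
    QuotientGroup.lift Z ρ₀ hζker with hρdef
  set K : Subgroup ((G ⋊[act] Multiplicative ℤ) ⧸ Z) := ρ.ker with hKdef
  set mkq : (G ⋊[act] Multiplicative ℤ) →* ((G ⋊[act] Multiplicative ℤ) ⧸ Z) :=
    QuotientGroup.mk' Z with hmkqdef
  have hρmk : ∀ h : G ⋊[act] Multiplicative ℤ, ρ (mkq h) = ρ₀ h := fun _ => rfl
  set ι : G → ((G ⋊[act] Multiplicative ℤ) ⧸ Z) :=
    fun g => mkq ⟨g, Multiplicative.ofAdd (1:ℤ)⟩ with hιdef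
  have hζpow : ∀ t : ℤ, ζ ^ t =
      (⟨b ^ (-t), Multiplicative.ofAdd (t * ((n-1:ℕ):ℤ))⟩ : G ⋊[act] Multiplicative ℤ) := by
    intro t
    have h1 : ζ = SemidirectProduct.inl b⁻¹ *
        SemidirectProduct.inr (Multiplicative.ofAdd ((n-1:ℕ):ℤ)) :=
      SemidirectProduct.mk_eq_inl_mul_inr _ _
    have hc : Commute (SemidirectProduct.inl b⁻¹ : G ⋊[act] Multiplicative ℤ)
        (SemidirectProduct.inr (Multiplicative.ofAdd ((n-1:ℕ):ℤ))) := by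
      show _ * _ = _ * _
      refine SemidirectProduct.ext ?_ ?_
      · show b⁻¹ * act (1 : Multiplicative ℤ) 1 = 1 * act (Multiplicative.ofAdd ((n-1:ℕ):ℤ)) b⁻¹
        rw [actapp, Θfixbinv, map_one]
        show b⁻¹ * (1 : MulAut G) (1 : G) = 1 * b⁻¹
        simp
      · show (1 : Multiplicative ℤ) * Multiplicative.ofAdd ((n-1:ℕ):ℤ) =
          Multiplicative.ofAdd ((n-1:ℕ):ℤ) * 1
        simp
    rw [h1, hc.mul_zpow, ← map_zpow, ← map_zpow]
    have e4 : (b⁻¹) ^ t = b ^ (-t) := by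
      rw [inv_zpow, zpow_neg]
    have e5 : (Multiplicative.ofAdd ((n-1:ℕ):ℤ)) ^ t =
        Multiplicative.ofAdd (t * ((n-1:ℕ):ℤ)) := by
      rw [show t * ((n-1:ℕ):ℤ) = t • ((n-1:ℕ):ℤ) from (zsmul_eq_mul _ _).symm, ofAdd_zsmul]
    rw [e4, e5, ← SemidirectProduct.mk_eq_inl_mul_inr]
  have hinj : Function.Injective ι := by
    intro x y hxy
    rw [hιdef] at hxy
    have h1 : (⟨x, Multiplicative.ofAdd (1:ℤ)⟩ : G ⋊[act] Multiplicative ℤ)⁻¹ *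
        ⟨y, Multiplicative.ofAdd (1:ℤ)⟩ ∈ Z := by
      rw [← QuotientGroup.eq]
      exact hxy
    rw [hZdef, Subgroup.mem_zpowers_iff] at h1
    obtain ⟨t, ht⟩ := h1
    have ht2 := ht
    rw [hζpow t] at ht2
    have hr := congrArg SemidirectProduct.right ht2
    simp only [SemidirectProduct.mul_right, SemidirectProduct.inv_right] at hr
    have hr2 : t * ((n-1:ℕ):ℤ) = 0 := by
      have h6 := congrArg Multiplicative.toAdd hr
      simp only [toAdd_ofAdd, toAdd_mul, toAdd_inv] at h6
      omega
    have ht0 : t = 0 := by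
      rcases mul_eq_zero.mp hr2 with h | h
      · exact h
      · exfalso
        have h8 : (n-1:ℕ) = 0 := by exact_mod_cast h
        omega
    rw [ht0, zpow_zero] at ht
    have ht3 : (⟨x, Multiplicative.ofAdd (1:ℤ)⟩ : G ⋊[act] Multiplicative ℤ) =
        ⟨y, Multiplicative.ofAdd (1:ℤ)⟩ := inv_mul_eq_one.mp ht.symm
    exact congrArg SemidirectProduct.left ht3
  have hρsurj : Function.Surjective ρ := by
    intro c
    obtain ⟨k, hk⟩ := ZMod.intCast_surjective (Multiplicative.toAdd c)
    refine ⟨mkq ⟨1, Multiplicative.ofAdd k⟩, ?_⟩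
    rw [hρmk, hρ₀app]
    show Multiplicative.ofAdd ((k : ZMod (n-1))) = c
    rw [hk]
    exact ofAdd_toAdd c
  have equivQ := QuotientGroup.quotientKerEquivOfSurjective ρ hρsurj
  haveI : NeZero (n-1) := ⟨by omega⟩
  have hcyc : IsCyclic (((G ⋊[act] Multiplicative ℤ) ⧸ Z) ⧸ K) := by
    haveI : IsCyclic (Multiplicative (ZMod (n-1))) := isCyclic_multiplicative
    exact isCyclic_of_surjective equivQ.symm equivQ.symm.surjective
  have hcard : Nat.card (((G ⋊[act] Multiplicative ℤ) ⧸ Z) ⧸ K) = n - 1 := by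
    rw [Nat.card_congr equivQ.toEquiv, Nat.card_congr Multiplicative.toAdd, Nat.card_zmod]
  -- the coset property
  have hcoset : Set.range ι = (mkq ⟨1, Multiplicative.ofAdd (1:ℤ)⟩) • (K : Set _) := by
    ext q
    constructor
    · rintro ⟨x, rfl⟩
      rw [mem_leftCoset_iff]
      show ((mkq ⟨1, Multiplicative.ofAdd (1:ℤ)⟩)⁻¹ * ι x) ∈ K
      rw [hKdef, MonoidHom.mem_ker, hιdef]
      show (ρ ((mkq ⟨1, Multiplicative.ofAdd (1:ℤ)⟩)⁻¹ * mkq ⟨x, Multiplicative.ofAdd (1:ℤ)⟩)) = 1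
      rw [map_mul, map_inv, hρmk, hρmk, hρ₀app, hρ₀app]
      exact inv_mul_cancel _
    · intro hq
      rw [mem_leftCoset_iff] at hq
      have hqe : q = mkq ⟨1, Multiplicative.ofAdd (1:ℤ)⟩ *
          ((mkq ⟨1, Multiplicative.ofAdd (1:ℤ)⟩)⁻¹ * q) := by rw [mul_inv_cancel_left]
      obtain ⟨h, hh⟩ := QuotientGroup.mk'_surjective Z
        ((mkq ⟨1, Multiplicative.ofAdd (1:ℤ)⟩)⁻¹ * q)
      obtain ⟨g, w⟩ := h
      have hw : ((Multiplicative.toAdd w : ℤ) : ZMod (n-1)) = 0 := by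
        have h5 : ρ ((mkq ⟨1, Multiplicative.ofAdd (1:ℤ)⟩)⁻¹ * q) = 1 := hq
        rw [← hh, hρmk, hρ₀app] at h5
        have h6 := congrArg Multiplicative.toAdd h5
        simpa using h6
      obtain ⟨t, ht⟩ := (ZMod.intCast_zmod_eq_zero_iff_dvd _ _).mp hw
      refine ⟨Θ g * b ^ t, ?_⟩
      rw [hιdef, hqe, ← hh, ← map_mul]
      have hB : (⟨1, Multiplicative.ofAdd (1:ℤ)⟩ : G ⋊[act] Multiplicative ℤ) * ⟨g, w⟩ =
          ⟨Θ g * b ^ t, Multiplicative.ofAdd (1:ℤ)⟩ * ζ ^ t := by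
        rw [hζpow t, SemidirectProduct.mul_def, SemidirectProduct.mul_def]
        refine SemidirectProduct.ext ?_ ?_
        · show 1 * act (Multiplicative.ofAdd (1:ℤ)) g =
            (Θ g * b ^ t) * act (Multiplicative.ofAdd (1:ℤ)) (b ^ (-t))
          rw [actapp, Θfixbz, zpow_one, one_mul, zpow_neg, mul_inv_cancel_right]
        · show Multiplicative.ofAdd (1:ℤ) * w =
            Multiplicative.ofAdd (1:ℤ) * Multiplicative.ofAdd (t * ((n-1:ℕ):ℤ))
          congr 1
          rw [← ofAdd_toAdd w, ht]
          congr 1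
          ring
      rw [hB, map_mul,
        show mkq (ζ ^ t) = 1 from (QuotientGroup.eq_one_iff _).mpr
          (zpow_mem (Subgroup.mem_zpowers ζ) t), mul_one]
  -- nested/flat conversion and the product formula
  have flat_shift : ∀ (k : ℕ) (y : ℕ → G),
      PostCoverAux.flatP mul one θ y (k+1) =
        y 0 * θ (PostCoverAux.flatP mul one θ (fun t => y (t+1)) k) := by
    intro k
    induction k with
    | zero =>
      intro y
      show (1:G) * θ^[0] (y 0) = y 0 * θ 1
      rw [hθ1, Function.iterate_zero_apply, one_mul, mul_one]
    | succ k ih =>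
      intro y
      have l1 : PostCoverAux.flatP mul one θ y (k+1+1) =
          PostCoverAux.flatP mul one θ y (k+1) * θ^[k+1] (y (k+1)) := rfl
      have l2 : PostCoverAux.flatP mul one θ (fun t => y (t+1)) (k+1) =
          PostCoverAux.flatP mul one θ (fun t => y (t+1)) k * θ^[k] (y (k+1)) := rfl
      rw [l1, ih y, l2, hθmul', ← Function.iterate_succ_apply' θ k (y (k+1)), mul_assoc]
  have hprodl : ∀ (k : ℕ) (y : ℕ → G),
      (List.ofFn fun i : Fin k =>
        (⟨y (i:ℕ), Multiplicative.ofAdd (1:ℤ)⟩ : G ⋊[act] Multiplicative ℤ)).prod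
        = ⟨PostCoverAux.flatP mul one θ y k, Multiplicative.ofAdd (k:ℤ)⟩ := by
    intro k
    induction k with
    | zero =>
      intro y
      rw [List.ofFn_zero, List.prod_nil]
      refine SemidirectProduct.ext ?_ ?_ <;> rfl
    | succ k ih =>
      intro y
      simp only [List.ofFn_succ, List.prod_cons, Fin.val_succ, Fin.val_zero]
      rw [ih (fun t => y (t+1))]
      refine SemidirectProduct.ext ?_ ?_
      · show y 0 * act (Multiplicative.ofAdd (1:ℤ))
            (PostCoverAux.flatP mul one θ (fun t => y (t+1)) k) = _
        rw [actapp, zpow_one, Θapp, ← flat_shift k y]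
      · show Multiplicative.ofAdd (1:ℤ) * Multiplicative.ofAdd (k:ℤ) =
          Multiplicative.ofAdd ((k+1:ℕ):ℤ)
        rw [← ofAdd_add]
        congr 1
        push_cast
        ring
  have hmain : ∀ x : Fin n → G, ι (f x) = (List.ofFn fun i : Fin n => ι (x i)).prod := by
    intro x
    set y : ℕ → G := fun t => if h : t < n then x ⟨t, h⟩ else 1 with hy
    have hxy : f x = fA n f y := by
      unfold PostCoverAux.fA
      congr 1
      funext i
      rw [hy]
      simp [i.isLt]
    have hAB : (⟨fA n f y, Multiplicative.ofAdd (1:ℤ)⟩ : G ⋊[act] Multiplicative ℤ) * ζ =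
        ⟨PostCoverAux.flatP mul one θ y n, Multiplicative.ofAdd (n:ℤ)⟩ := by
      rw [hζdef, SemidirectProduct.mul_def]
      refine SemidirectProduct.ext ?_ ?_
      · show fA n f y * act (Multiplicative.ofAdd (1:ℤ)) b⁻¹ =
          PostCoverAux.flatP mul one θ y n
        rw [actapp, Θfixbinv]
        have h9 : PostCoverAux.flatP mul one θ y n =
            PostCoverAux.flatP mul one θ y (n-1) * θ^[n-1] (y (n-1)) := by
          conv_lhs => rw [show n = (n-1)+1 by omega]
          rfl
        have h10 : fA n f y =
            PostCoverAux.flatP mul one θ y (n-1) * (b * y (n-1)) := hform y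
        rw [h10, h9, hconj' (y (n-1))]
        group
      · show Multiplicative.ofAdd (1:ℤ) * Multiplicative.ofAdd ((n-1:ℕ):ℤ) =
          Multiplicative.ofAdd (n:ℤ)
        rw [← ofAdd_add]
        congr 1
        omega
    have hformq : ι (f x) =
        mkq ⟨PostCoverAux.flatP mul one θ y n, Multiplicative.ofAdd (n:ℤ)⟩ := by
      rw [hιdef, hxy]
      show mkq _ = _
      rw [← hAB, map_mul,
        show mkq ζ = 1 from (QuotientGroup.eq_one_iff _).mpr (Subgroup.mem_zpowers ζ), mul_one]
    rw [hformq]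
    have h11 : (fun i : Fin n => ι (x i)) =
        fun i : Fin n => mkq ⟨y (i:ℕ), Multiplicative.ofAdd (1:ℤ)⟩ := by
      funext i
      rw [hιdef, hy]
      simp [i.isLt]
    rw [h11]
    rw [show (List.ofFn fun i : Fin n => mkq ⟨y (i:ℕ), Multiplicative.ofAdd (1:ℤ)⟩) =
        List.map mkq (List.ofFn fun i : Fin n =>
          (⟨y (i:ℕ), Multiplicative.ofAdd (1:ℤ)⟩ : G ⋊[act] Multiplicative ℤ)) from by
        rw [List.map_ofFn]; rfl]
    rw [← map_list_prod mkq, hprodl n y]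
  -- closure
  have hclos : Subgroup.closure (Set.range ι) = ⊤ := by
    rw [eq_top_iff]
    rintro q -
    obtain ⟨h, rfl⟩ := QuotientGroup.mk'_surjective Z q
    obtain ⟨g, w⟩ := h
    have base : ∀ gg : G,
        mkq ⟨gg, Multiplicative.ofAdd (1:ℤ)⟩ ∈ Subgroup.closure (Set.range ι) :=
      fun gg => Subgroup.subset_closure ⟨gg, rfl⟩
    have key : ∀ (k : ℤ) (gg : G),
        mkq ⟨gg, Multiplicative.ofAdd k⟩ ∈ Subgroup.closure (Set.range ι) := by
      have e0 : ∀ gg : G,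
          mkq ⟨gg, Multiplicative.ofAdd (0:ℤ)⟩ ∈ Subgroup.closure (Set.range ι) := by
        intro gg
        have heq : (⟨gg, Multiplicative.ofAdd (1:ℤ)⟩ : G ⋊[act] Multiplicative ℤ) *
            (⟨(1:G), Multiplicative.ofAdd (1:ℤ)⟩ : G ⋊[act] Multiplicative ℤ)⁻¹ =
            ⟨gg, Multiplicative.ofAdd (0:ℤ)⟩ := by
          refine SemidirectProduct.ext ?_ ?_ <;>
            simp [SemidirectProduct.mul_left, SemidirectProduct.mul_right,
              SemidirectProduct.inv_left, SemidirectProduct.inv_right, ← ofAdd_add]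
        have h3 := mul_mem (base gg) (inv_mem (base 1))
        rw [← map_inv, ← map_mul, heq] at h3
        exact h3
      intro k
      induction k using Int.induction_on with
      | zero => exact e0
      | succ i ih =>
        intro gg
        have heq : (⟨gg, Multiplicative.ofAdd (i:ℤ)⟩ : G ⋊[act] Multiplicative ℤ) *
            ⟨(1:G), Multiplicative.ofAdd (1:ℤ)⟩ =
            ⟨gg, Multiplicative.ofAdd ((i:ℤ)+1)⟩ := by
          refine SemidirectProduct.ext ?_ ?_ <;>
            simp [SemidirectProduct.mul_left, SemidirectProduct.mul_right, ← ofAdd_add]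
        have h3 := mul_mem (ih gg) (base 1)
        rw [← map_mul, heq] at h3
        exact h3
      | pred i ih =>
        intro gg
        have heq : (⟨gg, Multiplicative.ofAdd (-(i:ℤ))⟩ : G ⋊[act] Multiplicative ℤ) *
            (⟨(1:G), Multiplicative.ofAdd (1:ℤ)⟩ : G ⋊[act] Multiplicative ℤ)⁻¹ =
            ⟨gg, Multiplicative.ofAdd (-(i:ℤ)-1)⟩ := by
          refine SemidirectProduct.ext ?_ ?_
          · simp [SemidirectProduct.mul_left, SemidirectProduct.inv_left,
              SemidirectProduct.inv_right]
          · show Multiplicative.ofAdd (-(i:ℤ)) * (Multiplicative.ofAdd (1:ℤ))⁻¹ =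
              Multiplicative.ofAdd (-(i:ℤ)-1)
            rw [show -(i:ℤ)-1 = -(i:ℤ) + -1 from by ring, ofAdd_add]
            congr 1
        have h3 := mul_mem (ih gg) (inv_mem (base 1))
        rw [← map_inv, ← map_mul, heq] at h3
        exact h3
    have h5 := key (Multiplicative.toAdd w) g
    rw [ofAdd_toAdd] at h5
    exact h5
  exact ⟨GrpCat.of ((G ⋊[act] Multiplicative ℤ) ⧸ Z), ι, K, inferInstance, hinj,
    ⟨mkq ⟨1, Multiplicative.ofAdd (1:ℤ)⟩, hcoset⟩, hcyc, hcard, hmain, hclos⟩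
end
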